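/- arXiv:1301.5844 — 9 statements merged into one kernel-verified Lean document; each statement's English description precedes it below -/
import Mathlib

section
/- Let ε > 0 be the inverse of a positive integer and let x = (x_1,…,x_n) be a probability vector (all x_j ≥ 0 and Σ_j x_j = 1). Then there exists a probability vector x̃ = (x̃_1,…,x̃_n) (all x̃_j ≥ 0 and Σ_j x̃_j = 1) such that (1) every entry x̃_j is a non-negative integer multiple of ε, and (2) for every j ∈ {1,…,n}, |Σ_{k=1}^{j} (x̃_k − x_k)| < ε. -/
/-!
Round every prefix sum `x₁ + ⋯ + x_m` down to the grid `ε ℕ` and let `x̃` be the sequence of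
increments of the rounded prefix sums. Rounding down is monotone, so the increments are
non-negative multiples of `ε`; the prefix sums of `x̃` telescope to the rounded prefix sums
of `x`, which lie within `ε` of the true ones; and the total `1` lies on the grid because
`1 / ε` is an integer, so it is not moved by the rounding.
-/

open Finset

theorem Fin.sum_Iic_eq_sum_range {M : Type*} [AddCommMonoid M] {n : ℕ} (f : ℕ → M)
    (j : Fin n) :
    ∑ k ∈ Iic j, f k = ∑ k ∈ range (j + 1), f k := by
  rw [Nat.range_succ_eq_Iic, ← Fin.map_valEmbedding_Iic, sum_map]
  rfl

theorem Fin.sum_Iic_tsub {n : ℕ} {F : ℕ → ℕ} (hF : Monotone F) (j : Fin n) :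
    ∑ k ∈ Iic j, (F (k + 1) - F k) = F (j + 1) - F 0 := by
  rw [Fin.sum_Iic_eq_sum_range (fun k => F (k + 1) - F k), sum_range_tsub hF]

theorem Fin.sum_univ_tsub {n : ℕ} {F : ℕ → ℕ} (hF : Monotone F) :
    ∑ k : Fin n, (F (k + 1) - F k) = F n - F 0 := by
  rw [Fin.sum_univ_eq_sum_range (fun k => F (k + 1) - F k), sum_range_tsub hF]

theorem abs_natFloor_div_mul_sub_lt {ε s : ℝ} (hε : 0 < ε) (hs : 0 ≤ s) :
    |⌊s / ε⌋₊ * ε - s| < ε := by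
  have hle : (⌊s / ε⌋₊ : ℝ) * ε ≤ s :=
    (le_div_iff₀ hε).mp (Nat.floor_le (div_nonneg hs hε.le))
  have hlt : s < (⌊s / ε⌋₊ + 1 : ℝ) * ε := (div_lt_iff₀ hε).mp (Nat.lt_floor_add_one _)
  rw [abs_sub_lt_iff]
  constructor <;> linarith

section PrefixSum

variable {n : ℕ} (x : Fin n → ℝ)

def prefixSum (m : ℕ) : ℝ :=
  ∑ k ∈ univ.filter (fun k : Fin n => (k : ℕ) < m), x k

@[simp]
theorem prefixSum_zero : prefixSum x 0 = 0 := by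
  simp [prefixSum]

theorem prefixSum_self : prefixSum x n = ∑ k, x k := by
  simp [prefixSum]

theorem sum_Iic_eq_prefixSum (j : Fin n) : ∑ k ∈ Iic j, x k = prefixSum x (j + 1 : ℕ) := by
  unfold prefixSum
  refine sum_congr (Finset.ext fun k => ?_) fun _ _ => rfl
  simp only [mem_Iic, mem_filter, mem_univ, true_and]
  omega

variable {x}

theorem prefixSum_mono (hx : ∀ j, 0 ≤ x j) : Monotone (prefixSum x) :=
  fun _ _ hab => sum_le_sum_of_subset_of_nonneg
    (monotone_filter_right _ fun _ _ h => h.trans_le hab) fun k _ _ => hx k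

theorem prefixSum_nonneg (hx : ∀ j, 0 ≤ x j) (m : ℕ) : 0 ≤ prefixSum x m :=
  prefixSum_zero x ▸ prefixSum_mono hx m.zero_le

end PrefixSum

section FloorRounding

variable {n : ℕ} (x : Fin n → ℝ) (ε : ℝ)

noncomputable def floorRounding (j : Fin n) : ℝ :=
  ((⌊prefixSum x (j + 1 : ℕ) / ε⌋₊ - ⌊prefixSum x j / ε⌋₊ : ℕ) : ℝ) * ε

variable {x ε}

theorem monotone_natFloor_prefixSum_div (hx : ∀ j, 0 ≤ x j) (hε : 0 ≤ ε) :
    Monotone fun m => ⌊prefixSum x m / ε⌋₊ :=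
  fun _ _ hab => Nat.floor_mono (div_le_div_of_nonneg_right (prefixSum_mono hx hab) hε)

theorem sum_Iic_floorRounding (hx : ∀ j, 0 ≤ x j) (hε : 0 ≤ ε) (j : Fin n) :
    ∑ k ∈ Iic j, floorRounding x ε k = ⌊prefixSum x (j + 1 : ℕ) / ε⌋₊ * ε := by
  simp only [floorRounding, ← sum_mul, ← Nat.cast_sum,
    Fin.sum_Iic_tsub (monotone_natFloor_prefixSum_div hx hε), prefixSum_zero, zero_div,
    Nat.floor_zero, Nat.sub_zero]

theorem sum_floorRounding (hx : ∀ j, 0 ≤ x j) (hε : 0 ≤ ε) :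
    ∑ k, floorRounding x ε k = ⌊(∑ k, x k) / ε⌋₊ * ε := by
  simp only [floorRounding, ← sum_mul, ← Nat.cast_sum,
    Fin.sum_univ_tsub (monotone_natFloor_prefixSum_div hx hε), prefixSum_zero, zero_div,
    Nat.floor_zero, Nat.sub_zero, prefixSum_self]

end FloorRounding

/-- every probability vector admits an ε-rounding, for ε > 0 the
inverse of a positive integer: a probability vector whose entries are
non-negative integer multiples of ε and whose prefix sums differ from the
original by less than ε. -/
theorem epsilon_rounding_exists (n : ℕ) (ε : ℝ)
    (hε : ∃ M : ℕ, 0 < M ∧ ε = 1 / (M : ℝ))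
    (x : Fin n → ℝ) (hx0 : ∀ j, 0 ≤ x j) (hx1 : ∑ j, x j = 1) :
    ∃ y : Fin n → ℝ,
      (∀ j, 0 ≤ y j) ∧ (∑ j, y j = 1) ∧
      (∀ j, ∃ a : ℕ, y j = (a : ℝ) * ε) ∧
      (∀ j : Fin n, |∑ k ∈ Finset.Iic j, (y k - x k)| < ε) := by
  obtain ⟨M, hM, rfl⟩ := hε
  have hε : (0 : ℝ) < 1 / M := by positivity
  refine ⟨floorRounding x (1 / M), fun j => by unfold floorRounding; positivity, ?_,
    fun j => ⟨_, rfl⟩, fun j => ?_⟩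
  · rw [sum_floorRounding hx0 hε.le, hx1, one_div_one_div, Nat.floor_natCast]
    field_simp
  · rw [sum_sub_distrib, sum_Iic_floorRounding hx0 hε.le, sum_Iic_eq_prefixSum]
    exact abs_natFloor_div_mul_sub_lt hε (prefixSum_nonneg hx0 _)
end

section
/- Consider a competitiveness-based ranking game without ties with d ≥ 2 players and a single prize, in which for every player i the weakest action has cost c^i_1 = 0 and every action has cost c^i_j < 1. Then in any Nash equilibrium, exactly one player has strictly positive expected payoff, and every other player has expected payoff exactly 0. -/
open Finset
open scoped Classical

/-- Expected payoff of player `i` from playing pure strategy `j` in a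
competitiveness-based ranking game without ties with a single prize of value 1,
when every other player `k` plays the mixed strategy `x k`: the expectation over
the other players' pure profiles of (1 if `i`'s score beats all others, else 0)
minus the cost of `j`. -/
noncomputable def expPay (d : ℕ) (m : Fin d → ℕ)
    (score : ∀ i : Fin d, Fin (m i + 1) → ℝ) (c : ∀ i : Fin d, Fin (m i + 1) → ℝ)
    (x : ∀ i : Fin d, Fin (m i + 1) → ℝ) (i : Fin d) (j : Fin (m i + 1)) : ℝ :=
  ∑ s : (∀ k : Fin d, Fin (m k + 1)),
    if s i = j then
      (∏ k ∈ Finset.univ.erase i, x k (s k)) *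
        ((if ∀ k : Fin d, k ≠ i → score k (s k) < score i j then (1 : ℝ) else 0) - c i j)
    else 0

/-- Expected payoff of player `i` in the mixed profile `x`. -/
noncomputable def expUtil (d : ℕ) (m : Fin d → ℕ)
    (score : ∀ i : Fin d, Fin (m i + 1) → ℝ) (c : ∀ i : Fin d, Fin (m i + 1) → ℝ)
    (x : ∀ i : Fin d, Fin (m i + 1) → ℝ) (i : Fin d) : ℝ :=
  ∑ j, x i j * expPay d m score c x i j

/-- in any Nash equilibrium of a single-prize competitiveness-based
ranking game without ties (weakest actions cost 0, all costs < 1), exactly one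
player has strictly positive expected payoff and all others have expected
payoff exactly 0. -/
theorem one_player_positive_payoff (d : ℕ) (hd : 2 ≤ d) (m : Fin d → ℕ)
    (score c : ∀ i : Fin d, Fin (m i + 1) → ℝ)
    (hscore : ∀ i, StrictMono (score i)) (hcost : ∀ i, StrictMono (c i))
    (hties : Function.Injective fun p : Σ i : Fin d, Fin (m i + 1) => score p.1 p.2)
    (hc0 : ∀ i, c i 0 = 0) (hc1 : ∀ i j, c i j < 1)
    (x : ∀ i : Fin d, Fin (m i + 1) → ℝ)
    (hx0 : ∀ i j, 0 ≤ x i j) (hx1 : ∀ i, ∑ j, x i j = 1)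
    (hNE : ∀ (i : Fin d) (j j' : Fin (m i + 1)),
      expPay d m score c x i j > expPay d m score c x i j' → x i j' = 0) :
    ∃ p : Fin d, 0 < expUtil d m score c x p ∧
      ∀ i : Fin d, i ≠ p → expUtil d m score c x i = 0 := by
  classical
  have hdpos : 0 < d := by omega
  haveI : Nonempty (Fin d) := ⟨⟨0, hdpos⟩⟩
  -- supports
  set S : ∀ i : Fin d, Finset (Fin (m i + 1)) :=
    fun i => Finset.univ.filter (fun j => x i j ≠ 0) with hSdef
  have hSne : ∀ i, (S i).Nonempty := by
    intro i
    by_contra h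
    rw [Finset.not_nonempty_iff_eq_empty] at h
    have hz : ∑ j, x i j = 0 := by
      refine Finset.sum_eq_zero fun j _ => ?_
      by_contra hj
      have : j ∈ S i := Finset.mem_filter.mpr ⟨Finset.mem_univ _, hj⟩
      rw [h] at this
      exact absurd this (Finset.notMem_empty j)
    rw [hx1 i] at hz
    norm_num at hz
  have hmemS : ∀ (i : Fin d) (j : Fin (m i + 1)), x i j ≠ 0 → j ∈ S i :=
    fun i j hj => Finset.mem_filter.mpr ⟨Finset.mem_univ _, hj⟩
  set ℓ : ∀ i : Fin d, Fin (m i + 1) := fun i => (S i).min' (hSne i) with hℓdef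
  set t : ∀ i : Fin d, Fin (m i + 1) := fun i => (S i).max' (hSne i) with htdef
  have hxℓ : ∀ i, x i (ℓ i) ≠ 0 := fun i => (Finset.mem_filter.mp ((S i).min'_mem (hSne i))).2
  have hxt : ∀ i, x i (t i) ≠ 0 := fun i => (Finset.mem_filter.mp ((S i).max'_mem (hSne i))).2
  have hℓ_le : ∀ (i : Fin d) (j : Fin (m i + 1)), x i j ≠ 0 → ℓ i ≤ j :=
    fun i j hj => (S i).min'_le j (hmemS i j hj)
  have h_le_t : ∀ (i : Fin d) (j : Fin (m i + 1)), x i j ≠ 0 → j ≤ t i :=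
    fun i j hj => (S i).le_max' j (hmemS i j hj)
  -- total weight is 1
  have hT : ∀ (i : Fin d) (j : Fin (m i + 1)),
      (∑ s : (∀ k : Fin d, Fin (m k + 1)),
        if s i = j then ∏ k ∈ Finset.univ.erase i, x k (s k) else 0) = 1 := by
    intro i j
    set g : ∀ k : Fin d, Fin (m k + 1) → ℝ :=
      fun k a => if hk : k = i then (if Fin.cast (by rw [hk]) a = j then 1 else 0) else x k a
      with hgdef
    have h1 : ∀ s : (∀ k : Fin d, Fin (m k + 1)),
        (if s i = j then ∏ k ∈ Finset.univ.erase i, x k (s k) else 0) = ∏ k, g k (s k) := by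
      intro s
      have hgi : g i (s i) = if s i = j then 1 else 0 := by
        rw [hgdef]
        simp
      have hrest : ∀ k ∈ Finset.univ.erase i, g k (s k) = x k (s k) := by
        intro k hk
        have hki : k ≠ i := (Finset.mem_erase.mp hk).1
        rw [hgdef]
        simp [hki]
      rw [← Finset.mul_prod_erase Finset.univ (fun k => g k (s k)) (Finset.mem_univ i),
        hgi, Finset.prod_congr rfl hrest]
      by_cases h : s i = j <;> simp [h]
    rw [Finset.sum_congr rfl (fun s _ => h1 s), ← Fintype.piFinset_univ,
      ← Finset.prod_univ_sum]
    refine Finset.prod_eq_one fun k _ => ?_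
    by_cases hk : k = i
    · subst hk
      rw [hgdef]
      simp
    · rw [hgdef]
      simp only [dif_neg hk]
      exact hx1 k
  -- constant-indicator computation of expPay
  have hconst : ∀ (i : Fin d) (j : Fin (m i + 1)) (b : ℝ),
      (∀ s : (∀ k : Fin d, Fin (m k + 1)), s i = j →
        (∏ k ∈ Finset.univ.erase i, x k (s k)) ≠ 0 →
        (if ∀ k : Fin d, k ≠ i → score k (s k) < score i j then (1 : ℝ) else 0) = b) →
      expPay d m score c x i j = b - c i j := by
    intro i j b hb
    unfold expPay
    have h1 : ∀ s : (∀ k : Fin d, Fin (m k + 1)),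
        (if s i = j then
          (∏ k ∈ Finset.univ.erase i, x k (s k)) *
            ((if ∀ k : Fin d, k ≠ i → score k (s k) < score i j then (1 : ℝ) else 0) - c i j)
        else 0)
        = (if s i = j then ∏ k ∈ Finset.univ.erase i, x k (s k) else 0) * (b - c i j) := by
      intro s
      by_cases h1 : s i = j
      · rw [if_pos h1, if_pos h1]
        by_cases h2 : (∏ k ∈ Finset.univ.erase i, x k (s k)) = 0
        · rw [h2]; ring
        · rw [hb s h1 h2]
      · rw [if_neg h1, if_neg h1, zero_mul]
    rw [Finset.sum_congr rfl (fun s _ => h1 s), ← Finset.sum_mul, hT i j, one_mul]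
  -- payoff of strategy 0 is nonnegative
  have hpay0 : ∀ i, 0 ≤ expPay d m score c x i 0 := by
    intro i
    unfold expPay
    refine Finset.sum_nonneg fun s _ => ?_
    by_cases h : s i = 0
    · rw [if_pos h]
      refine mul_nonneg (Finset.prod_nonneg fun k _ => hx0 k (s k)) ?_
      rw [hc0 i, sub_zero]
      split <;> norm_num
    · rw [if_neg h]
  -- utility equals payoff at any support strategy
  have hEq : ∀ (i : Fin d) (j0 : Fin (m i + 1)), x i j0 ≠ 0 →
      expUtil d m score c x i = expPay d m score c x i j0 := by
    intro i j0 hj0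
    unfold expUtil
    have h1 : ∀ j, x i j * expPay d m score c x i j = x i j * expPay d m score c x i j0 := by
      intro j
      rcases lt_trichotomy (expPay d m score c x i j) (expPay d m score c x i j0) with h | h | h
      · rw [hNE i j0 j h, zero_mul, zero_mul]
      · rw [h]
      · exact absurd (hNE i j j0 h) hj0
    rw [Finset.sum_congr rfl (fun j _ => h1 j), ← Finset.sum_mul, hx1, one_mul]
  -- utility dominates every pure payoff
  have hmax : ∀ (i : Fin d) (j : Fin (m i + 1)),
      expPay d m score c x i j ≤ expUtil d m score c x i := by
    intro i j
    rw [hEq i (ℓ i) (hxℓ i)]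
    by_contra h
    push_neg at h
    exact hxℓ i (hNE i j (ℓ i) h)
  have hU0 : ∀ i, 0 ≤ expUtil d m score c x i := fun i => le_trans (hpay0 i) (hmax i 0)
  -- the player with the highest minimal support score
  obtain ⟨p, -, hp⟩ := Finset.exists_max_image Finset.univ
    (fun i => score i (ℓ i)) Finset.univ_nonempty
  have hplt : ∀ i : Fin d, i ≠ p → score i (ℓ i) < score p (ℓ p) := by
    intro i hip
    refine lt_of_le_of_ne (hp i (Finset.mem_univ i)) fun h => ?_
    have := hties (a₁ := ⟨i, ℓ i⟩) (a₂ := ⟨p, ℓ p⟩) h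
    exact hip (congrArg Sigma.fst this)
  -- all players other than p have zero utility
  have hzero : ∀ i : Fin d, i ≠ p → expUtil d m score c x i = 0 := by
    intro i hip
    have hpayℓ : expPay d m score c x i (ℓ i) = 0 - c i (ℓ i) := by
      refine hconst i (ℓ i) 0 fun s hsi hw => ?_
      rw [if_neg]
      intro hall
      have hpmem : p ∈ Finset.univ.erase i :=
        Finset.mem_erase.mpr ⟨Ne.symm hip, Finset.mem_univ p⟩
      have hxp : x p (s p) ≠ 0 := Finset.prod_ne_zero_iff.mp hw p hpmem
      have h1 : score p (ℓ p) ≤ score p (s p) :=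
        (hscore p).monotone (hℓ_le p (s p) hxp)
      have h2 : score p (s p) < score i (ℓ i) := hall p (Ne.symm hip)
      exact absurd (lt_of_le_of_lt h1 h2) (not_lt.mpr (le_of_lt (hplt i hip)))
    have h1 : expUtil d m score c x i ≤ 0 := by
      rw [hEq i (ℓ i) (hxℓ i), hpayℓ, zero_sub, neg_nonpos]
      rcases eq_or_lt_of_le (Fin.zero_le (ℓ i)) with h | h
      · rw [← h, hc0]
      · exact le_of_lt (by rw [← hc0 i]; exact hcost i h)
    exact le_antisymm h1 (hU0 i)
  -- the player with the highest maximal support score has positive utility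
  obtain ⟨w, -, hw⟩ := Finset.exists_max_image Finset.univ
    (fun i => score i (t i)) Finset.univ_nonempty
  have hpayt : expPay d m score c x w (t w) = 1 - c w (t w) := by
    refine hconst w (t w) 1 fun s hsw hwn => ?_
    rw [if_pos]
    intro k hk
    have hkmem : k ∈ Finset.univ.erase w := Finset.mem_erase.mpr ⟨hk, Finset.mem_univ k⟩
    have hxk : x k (s k) ≠ 0 := Finset.prod_ne_zero_iff.mp hwn k hkmem
    have h1 : score k (s k) ≤ score k (t k) := (hscore k).monotone (h_le_t k (s k) hxk)
    have h2 : score k (t k) ≤ score w (t w) := hw k (Finset.mem_univ k)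
    refine lt_of_le_of_ne (le_trans h1 h2) fun h => ?_
    have := hties (a₁ := ⟨k, s k⟩) (a₂ := ⟨w, t w⟩) h
    exact hk (congrArg Sigma.fst this)
  have hwpos : 0 < expUtil d m score c x w := by
    refine lt_of_lt_of_le ?_ (hmax w (t w))
    rw [hpayt, sub_pos]
    exact hc1 w (t w)
  have hwp : w = p := by
    by_contra h
    rw [hzero w h] at hwpos
    exact lt_irrefl 0 hwpos
  exact ⟨p, hwp ▸ hwpos, hzero⟩
end

section
/- Consider a competitiveness-based ranking game without ties with d ≥ 2 players and a single prize, in which for every player i the weakest action has cost c^i_1 = 0 and every action has cost c^i_j < 1. Let p be the player who possesses the action of maximal score among all actions of all players (this player is unique since scores are pairwise distinct), and let c be the cost of that action. Then in any Nash equilibrium, player p's expected payoff is at least 1 − c > 0, and every player other than p has expected payoff exactly 0. -/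
open Finset
open scoped Classical

/-- Winning probability of player `i` playing pure strategy `j`. -/
noncomputable def winProb (d : ℕ) (m : Fin d → ℕ)
    (score : ∀ i : Fin d, Fin (m i + 1) → ℝ)
    (x : ∀ i : Fin d, Fin (m i + 1) → ℝ) (i : Fin d) (j : Fin (m i + 1)) : ℝ :=
  ∑ s : (∀ k : Fin d, Fin (m k + 1)),
    if s i = j then
      (∏ k ∈ Finset.univ.erase i, x k (s k)) *
        (if ∀ k : Fin d, k ≠ i → score k (s k) < score i j then (1 : ℝ) else 0)
    else 0

lemma aux_sum_one (d : ℕ) (m : Fin d → ℕ) (x : ∀ i : Fin d, Fin (m i + 1) → ℝ)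
    (hx1 : ∀ i, ∑ j, x i j = 1) (i : Fin d) (j : Fin (m i + 1)) :
    (∑ s : (∀ k : Fin d, Fin (m k + 1)),
      if s i = j then (∏ k ∈ Finset.univ.erase i, x k (s k)) else 0) = 1 := by
  classical
  set y : ∀ k : Fin d, Fin (m k + 1) → ℝ := fun k a =>
    if k = i then (if (⟨k, a⟩ : Σ r : Fin d, Fin (m r + 1)) = ⟨i, j⟩ then 1 else 0) else x k a
    with hy
  have hterm : ∀ s : (∀ k : Fin d, Fin (m k + 1)),
      (if s i = j then (∏ k ∈ Finset.univ.erase i, x k (s k)) else 0) = ∏ k, y k (s k) := by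
    intro s
    rw [← Finset.mul_prod_erase univ (fun k => y k (s k)) (mem_univ i)]
    have h1 : y i (s i) = if s i = j then 1 else 0 := by
      simp [hy, Sigma.mk.inj_iff]
    have h2 : ∏ k ∈ univ.erase i, y k (s k) = ∏ k ∈ univ.erase i, x k (s k) := by
      refine Finset.prod_congr rfl fun k hk => ?_
      simp [hy, (Finset.mem_erase.mp hk).1]
    rw [h1, h2]
    by_cases h : s i = j <;> simp [h]
  rw [Finset.sum_congr rfl fun s _ => hterm s, ← Fintype.prod_sum y]
  apply Finset.prod_eq_one
  intro k _
  by_cases hk : k = i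
  · subst hk
    simp [hy, Sigma.mk.inj_iff]
  · simp [hy, hk, hx1 k]

lemma expPay_eq (d : ℕ) (m : Fin d → ℕ)
    (score c : ∀ i : Fin d, Fin (m i + 1) → ℝ)
    (x : ∀ i : Fin d, Fin (m i + 1) → ℝ)
    (hx1 : ∀ i, ∑ j, x i j = 1) (i : Fin d) (j : Fin (m i + 1)) :
    expPay d m score c x i j = winProb d m score x i j - c i j := by
  classical
  have h : ∀ s : (∀ k : Fin d, Fin (m k + 1)),
      (if s i = j then (∏ k ∈ Finset.univ.erase i, x k (s k)) *
        ((if ∀ k : Fin d, k ≠ i → score k (s k) < score i j then (1:ℝ) else 0) - c i j) else 0)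
      = (if s i = j then (∏ k ∈ Finset.univ.erase i, x k (s k)) *
          (if ∀ k : Fin d, k ≠ i → score k (s k) < score i j then (1:ℝ) else 0) else 0)
        - (if s i = j then (∏ k ∈ Finset.univ.erase i, x k (s k)) else 0) * c i j := by
    intro s
    by_cases hs : s i = j <;> simp [hs, mul_sub]
  unfold expPay winProb
  rw [Finset.sum_congr rfl fun s _ => h s, Finset.sum_sub_distrib, ← Finset.sum_mul,
    aux_sum_one d m x hx1 i j, one_mul]

lemma winProb_nonneg (d : ℕ) (m : Fin d → ℕ)
    (score : ∀ i : Fin d, Fin (m i + 1) → ℝ)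
    (x : ∀ i : Fin d, Fin (m i + 1) → ℝ)
    (hx0 : ∀ i j, 0 ≤ x i j) (i : Fin d) (j : Fin (m i + 1)) :
    0 ≤ winProb d m score x i j := by
  classical
  apply Finset.sum_nonneg
  intro s _
  by_cases hs : s i = j
  · rw [if_pos hs]
    apply mul_nonneg (Finset.prod_nonneg fun k _ => hx0 k (s k))
    split <;> norm_num
  · rw [if_neg hs]

lemma winProb_pos_exists (d : ℕ) (m : Fin d → ℕ)
    (score : ∀ i : Fin d, Fin (m i + 1) → ℝ)
    (x : ∀ i : Fin d, Fin (m i + 1) → ℝ)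
    (i : Fin d) (j : Fin (m i + 1)) (h : 0 < winProb d m score x i j)
    (k : Fin d) (hk : k ≠ i) : ∃ j', x k j' ≠ 0 ∧ score k j' < score i j := by
  classical
  unfold winProb at h
  obtain ⟨s, -, hs⟩ := Finset.exists_ne_zero_of_sum_ne_zero h.ne'
  by_cases hsi : s i = j
  · rw [if_pos hsi] at hs
    have hall : ∀ k : Fin d, k ≠ i → score k (s k) < score i j := by
      by_contra hc
      rw [if_neg hc, mul_zero] at hs
      exact hs rfl
    rw [if_pos hall, mul_one] at hs
    refine ⟨s k, ?_, hall k hk⟩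
    exact (Finset.prod_ne_zero_iff.mp hs) k (Finset.mem_erase.mpr ⟨hk, Finset.mem_univ k⟩)
  · rw [if_neg hsi] at hs
    exact absurd rfl hs

lemma winProb_max (d : ℕ) (m : Fin d → ℕ)
    (score : ∀ i : Fin d, Fin (m i + 1) → ℝ)
    (x : ∀ i : Fin d, Fin (m i + 1) → ℝ)
    (hx1 : ∀ i, ∑ j, x i j = 1)
    (hties : Function.Injective fun p : Σ i : Fin d, Fin (m i + 1) => score p.1 p.2)
    (p : Fin d) (jmax : Fin (m p + 1))
    (hmax : ∀ (i : Fin d) (j : Fin (m i + 1)), score i j ≤ score p jmax) :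
    winProb d m score x p jmax = 1 := by
  classical
  unfold winProb
  have h : ∀ s : (∀ k : Fin d, Fin (m k + 1)),
      (if s p = jmax then (∏ k ∈ Finset.univ.erase p, x k (s k)) *
          (if ∀ k : Fin d, k ≠ p → score k (s k) < score p jmax then (1:ℝ) else 0) else 0)
      = (if s p = jmax then (∏ k ∈ Finset.univ.erase p, x k (s k)) else 0) := by
    intro s
    by_cases hs : s p = jmax
    · have hall : ∀ k : Fin d, k ≠ p → score k (s k) < score p jmax := by
        intro k hk
        refine lt_of_le_of_ne (hmax k (s k)) fun he => ?_
        have h2 : (⟨k, s k⟩ : Σ r : Fin d, Fin (m r + 1)) = ⟨p, jmax⟩ := hties he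
        exact hk (congrArg Sigma.fst h2)
      rw [if_pos hs, if_pos hs, if_pos hall, mul_one]
    · rw [if_neg hs, if_neg hs]
  rw [Finset.sum_congr rfl fun s _ => h s]
  exact aux_sum_one d m x hx1 p jmax

/-- the unique player `p` owning the action of maximal score gets
expected payoff at least `1 - c` (where `c` is the cost of that action) in any
Nash equilibrium, and all other players get expected payoff exactly 0. -/
theorem strongest_player_payoff (d : ℕ) (hd : 2 ≤ d) (m : Fin d → ℕ)
    (score c : ∀ i : Fin d, Fin (m i + 1) → ℝ)
    (hscore : ∀ i, StrictMono (score i)) (hcost : ∀ i, StrictMono (c i))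
    (hties : Function.Injective fun p : Σ i : Fin d, Fin (m i + 1) => score p.1 p.2)
    (hc0 : ∀ i, c i 0 = 0) (hc1 : ∀ i j, c i j < 1)
    (p : Fin d) (jmax : Fin (m p + 1))
    (hmax : ∀ (i : Fin d) (j : Fin (m i + 1)), score i j ≤ score p jmax)
    (x : ∀ i : Fin d, Fin (m i + 1) → ℝ)
    (hx0 : ∀ i j, 0 ≤ x i j) (hx1 : ∀ i, ∑ j, x i j = 1)
    (hNE : ∀ (i : Fin d) (j j' : Fin (m i + 1)),
      expPay d m score c x i j > expPay d m score c x i j' → x i j' = 0) :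
    0 < 1 - c p jmax ∧
    1 - c p jmax ≤ expUtil d m score c x p ∧
    ∀ i : Fin d, i ≠ p → expUtil d m score c x i = 0 := by
  classical
  have hcnn : ∀ (i : Fin d) (j : Fin (m i + 1)), 0 ≤ c i j := fun i j =>
    (hc0 i) ▸ (hcost i).monotone (Fin.zero_le j)
  have hbr : ∀ (i : Fin d) (j j' : Fin (m i + 1)), x i j ≠ 0 →
      expPay d m score c x i j' ≤ expPay d m score c x i j := by
    intro i j j' hj
    by_contra h
    exact hj (hNE i j' j (lt_of_not_ge h))
  have pay_jmax : expPay d m score c x p jmax = 1 - c p jmax := by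
    rw [expPay_eq d m score c x hx1 p jmax,
      winProb_max d m score x hx1 hties p jmax hmax]
  have hcpos : (0:ℝ) < 1 - c p jmax := by linarith [hc1 p jmax]
  have util_ge : ∀ (i : Fin d) (b : ℝ),
      (∀ j, x i j ≠ 0 → b ≤ expPay d m score c x i j) →
      b ≤ expUtil d m score c x i := by
    intro i b hb
    unfold expUtil
    have h : ∑ j, x i j * b ≤ ∑ j, x i j * expPay d m score c x i j := by
      apply Finset.sum_le_sum
      intro j _
      by_cases hj : x i j = 0
      · simp [hj]
      · exact mul_le_mul_of_nonneg_left (hb j hj) (hx0 i j)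
    calc b = ∑ j, x i j * b := by rw [← Finset.sum_mul, hx1 i, one_mul]
    _ ≤ _ := h
  have hup : 1 - c p jmax ≤ expUtil d m score c x p := by
    refine util_ge p _ fun j hj => ?_
    rw [← pay_jmax]
    exact hbr p j jmax hj
  have hpay0 : ∀ i : Fin d, (0:ℝ) ≤ expPay d m score c x i 0 := by
    intro i
    rw [expPay_eq d m score c x hx1 i 0, hc0 i, sub_zero]
    exact winProb_nonneg d m score x hx0 i 0
  have hu0 : ∀ i, (0:ℝ) ≤ expUtil d m score c x i := fun i =>
    util_ge i 0 fun j hj => le_trans (hpay0 i) (hbr i j 0 hj)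
  have hsupp : ∀ i : Fin d, ∃ j, x i j ≠ 0 := by
    intro i
    by_contra h
    push_neg at h
    have h1 := hx1 i
    rw [Finset.sum_eq_zero (fun j _ => h j)] at h1
    norm_num at h1
  have hposne : ∀ i : Fin d, 0 < expUtil d m score c x i →
      ∀ j, x i j ≠ 0 → 0 < expPay d m score c x i j := by
    intro i hi j hj
    unfold expUtil at hi
    obtain ⟨j0, -, hj0⟩ : ∃ j0 ∈ univ, 0 < x i j0 * expPay d m score c x i j0 := by
      by_contra hcon
      push_neg at hcon
      have h2 : (∑ j, x i j * expPay d m score c x i j) ≤ 0 :=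
        Finset.sum_nonpos fun j hjm => hcon j hjm
      linarith
    have hx : x i j0 ≠ 0 := by
      intro h; rw [h, zero_mul] at hj0; exact lt_irrefl _ hj0
    have hp0 : 0 < expPay d m score c x i j0 := by
      by_contra h
      push_neg at h
      have := mul_nonpos_of_nonneg_of_nonpos (hx0 i j0) h
      linarith
    exact lt_of_lt_of_le hp0 (hbr i j j0 hj)
  have key : ∀ i : Fin d, i ≠ p → expUtil d m score c x i ≤ 0 := by
    intro i hip
    by_contra hcon
    push_neg at hcon
    have hpi : ∀ j, x i j ≠ 0 → 0 < expPay d m score c x i j := hposne i hcon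
    have hpp : ∀ j, x p j ≠ 0 → 0 < expPay d m score c x p j := by
      intro j hj
      calc (0:ℝ) < 1 - c p jmax := hcpos
      _ = expPay d m score c x p jmax := pay_jmax.symm
      _ ≤ expPay d m score c x p j := hbr p j jmax hj
    have hlow : ∀ (a b : Fin d), b ≠ a →
        (∀ j, x a j ≠ 0 → 0 < expPay d m score c x a j) →
        ∀ j, x a j ≠ 0 → ∃ j', x b j' ≠ 0 ∧ score b j' < score a j := by
      intro a b hba hpos j hj
      have h1 : 0 < winProb d m score x a j := by
        have h2 := hpos j hj
        rw [expPay_eq d m score c x hx1 a j] at h2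
        have h3 := hcnn a j
        linarith
      exact winProb_pos_exists d m score x a j h1 b hba
    obtain ⟨α, hα, hαmin⟩ := Finset.exists_min_image
      (univ.filter fun j => x i j ≠ 0) (score i) (by
        obtain ⟨j, hj⟩ := hsupp i
        exact ⟨j, Finset.mem_filter.mpr ⟨Finset.mem_univ j, hj⟩⟩)
    have hαx : x i α ≠ 0 := (Finset.mem_filter.mp hα).2
    obtain ⟨β, hβx, hβlt⟩ := hlow i p (Ne.symm hip) hpi α hαx
    obtain ⟨α', hα'x, hα'lt⟩ := hlow p i hip hpp β hβx
    have hm := hαmin α' (Finset.mem_filter.mpr ⟨Finset.mem_univ _, hα'x⟩)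
    linarith
  exact ⟨hcpos, hup, fun i hip => le_antisymm (key i hip) (hu0 i)⟩
end

section
/- Consider a competitiveness-based ranking game without ties with d ≥ 2 players and a single prize, in which for every player i the weakest action has cost c^i_1 = 0 and every action has cost c^i_j < 1, and in which all costs c^i_j are rational numbers. Then in every Nash equilibrium x, every probability x^i_j is a rational number. -/
open Finset
open scoped Classical

namespace RankAux

noncomputable def Krat : Subfield ℝ := (Rat.castHom ℝ).fieldRange

lemma ratCast_mem_Krat (q : ℚ) : (q : ℝ) ∈ Krat := ⟨q, rfl⟩

lemma mem_Krat_iff (r : ℝ) : r ∈ Krat ↔ ∃ q : ℚ, r = (q : ℝ) := by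
  constructor
  · rintro ⟨q, rfl⟩; exact ⟨q, rfl⟩
  · rintro ⟨q, rfl⟩; exact ⟨q, rfl⟩

variable {d : ℕ} {m : Fin d → ℕ}

noncomputable def Fc (score x : ∀ i : Fin d, Fin (m i + 1) → ℝ) (k : Fin d) (t : ℝ) : ℝ :=
  ∑ j, if score k j < t then x k j else 0

variable (score c x : ∀ i : Fin d, Fin (m i + 1) → ℝ)

lemma Fc_nonneg' (hx0 : ∀ i j, 0 ≤ x i j) (k : Fin d) (t : ℝ) : 0 ≤ Fc score x k t := by
  apply Finset.sum_nonneg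
  intro j _
  by_cases h : score k j < t <;> simp [h, hx0]

lemma Fc_congr' {k : Fin d} {t t' : ℝ}
    (h : ∀ j, x k j ≠ 0 → (score k j < t ↔ score k j < t')) :
    Fc score x k t = Fc score x k t' := by
  apply Finset.sum_congr rfl
  intro j _
  by_cases hx : x k j = 0
  · by_cases h1 : score k j < t <;> by_cases h2 : score k j < t' <;> simp [h1, h2, hx]
  · rw [if_congr (h j hx) rfl rfl]

lemma Fc_eq_one' (hx1 : ∀ i, ∑ j, x i j = 1) {k : Fin d} {t : ℝ}
    (h : ∀ j, x k j ≠ 0 → score k j < t) : Fc score x k t = 1 := by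
  rw [← hx1 k]
  apply Finset.sum_congr rfl
  intro j _
  by_cases hx : x k j = 0
  · by_cases h1 : score k j < t <;> simp [h1, hx]
  · rw [if_pos (h j hx)]

lemma Fc_eq_zero₀ {k : Fin d} {t : ℝ}
    (h : ∀ j, x k j ≠ 0 → ¬ score k j < t) : Fc score x k t = 0 := by
  apply Finset.sum_eq_zero
  intro j _
  by_cases hx : x k j = 0
  · by_cases h1 : score k j < t <;> simp [h1, hx]
  · rw [if_neg (h j hx)]

lemma Fc_eq_zero'' (hx0 : ∀ i j, 0 ≤ x i j) {k : Fin d} {t : ℝ}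
    (h : Fc score x k t = 0) : ∀ j, x k j ≠ 0 → ¬ score k j < t := by
  intro j hj hlt
  have h0 : ∀ j' ∈ Finset.univ, (0:ℝ) ≤ if score k j' < t then x k j' else 0 := by
    intro j' _
    by_cases h1 : score k j' < t <;> simp [h1, hx0]
  have := (Finset.sum_eq_zero_iff_of_nonneg h0).mp h j (Finset.mem_univ j)
  rw [if_pos hlt] at this
  exact hj this

lemma cost_nonneg' (hcost : ∀ i, StrictMono (c i)) (hc0 : ∀ i, c i 0 = 0)
    (i : Fin d) (j : Fin (m i + 1)) : 0 ≤ c i j := by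
  rw [← hc0 i]
  exact (hcost i).monotone (Fin.zero_le j)

lemma cost_pos' (hcost : ∀ i, StrictMono (c i)) (hc0 : ∀ i, c i 0 = 0)
    {i : Fin d} {j : Fin (m i + 1)} (hj : j ≠ 0) : 0 < c i j := by
  rw [← hc0 i]
  exact hcost i (Fin.pos_of_ne_zero hj)

lemma exists_supp' (hx1 : ∀ i, ∑ j, x i j = 1) (i : Fin d) : ∃ j, x i j ≠ 0 := by
  by_contra h
  push_neg at h
  have : (∑ j, x i j) = 0 := Finset.sum_eq_zero fun j _ => h j
  rw [hx1 i] at this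
  exact one_ne_zero this


lemma expPay_eq' (hx1 : ∀ i, ∑ j, x i j = 1) (i : Fin d) (j : Fin (m i + 1)) :
    expPay d m score c x i j
      = (∏ k ∈ Finset.univ.erase i, Fc score x k (score i j)) - c i j := by
  classical
  rw [expPay, ← Equiv.sum_comp (Equiv.piSplitAt i fun k => Fin (m k + 1)).symm,
    Fintype.sum_prod_type]
  have hsymm : ∀ (a : Fin (m i + 1)) (g : ∀ k : {k : Fin d // k ≠ i}, Fin (m k.1 + 1)),
      ((Equiv.piSplitAt i fun k => Fin (m k + 1)).symm (a, g)) i = a := by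
    intro a g
    simp [Equiv.piSplitAt_symm_apply]
  have hsymm' : ∀ (a : Fin (m i + 1)) (g : ∀ k : {k : Fin d // k ≠ i}, Fin (m k.1 + 1))
      (k : Fin d) (hk : k ≠ i),
      ((Equiv.piSplitAt i fun k => Fin (m k + 1)).symm (a, g)) k = g ⟨k, hk⟩ := by
    intro a g k hk
    simp [Equiv.piSplitAt_symm_apply, hk]
  have hmem : ∀ k : Fin d, k ∈ Finset.univ.erase i ↔ k ≠ i := by
    intro k; simp [Finset.mem_erase]
  have step1 : ∀ a : Fin (m i + 1),
      (∑ g : ∀ k : {k : Fin d // k ≠ i}, Fin (m k.1 + 1),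
        if ((Equiv.piSplitAt i fun k => Fin (m k + 1)).symm (a, g)) i = j then
          (∏ k ∈ Finset.univ.erase i, x k (((Equiv.piSplitAt i fun k => Fin (m k + 1)).symm (a, g)) k)) *
            ((if ∀ k : Fin d, k ≠ i → score k (((Equiv.piSplitAt i fun k => Fin (m k + 1)).symm (a, g)) k) < score i j then (1 : ℝ) else 0) - c i j)
        else 0)
      = if a = j then
          (∑ g : ∀ k : {k : Fin d // k ≠ i}, Fin (m k.1 + 1),
            ∏ k : {k : Fin d // k ≠ i}, (if score k.1 (g k) < score i j then x k.1 (g k) else 0))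
          - c i j
        else 0 := by
    intro a
    by_cases ha : a = j
    · subst ha
      rw [if_pos rfl]
      have key : ∀ g : ∀ k : {k : Fin d // k ≠ i}, Fin (m k.1 + 1),
          (if ((Equiv.piSplitAt i fun k => Fin (m k + 1)).symm (a, g)) i = a then
            (∏ k ∈ Finset.univ.erase i, x k (((Equiv.piSplitAt i fun k => Fin (m k + 1)).symm (a, g)) k)) *
              ((if ∀ k : Fin d, k ≠ i → score k (((Equiv.piSplitAt i fun k => Fin (m k + 1)).symm (a, g)) k) < score i a then (1 : ℝ) else 0) - c i a)
          else 0)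
          = (∏ k : {k : Fin d // k ≠ i}, (if score k.1 (g k) < score i a then x k.1 (g k) else 0))
            - c i a * ∏ k : {k : Fin d // k ≠ i}, x k.1 (g k) := by
        intro g
        rw [if_pos (hsymm a g)]
        rw [Finset.prod_subtype (Finset.univ.erase i) hmem
          (fun k => x k (((Equiv.piSplitAt i fun k => Fin (m k + 1)).symm (a, g)) k))]
        have h1 : ∀ k : {k : Fin d // k ≠ i},
            x k.1 (((Equiv.piSplitAt i fun k => Fin (m k + 1)).symm (a, g)) k.1) = x k.1 (g k) := by
          intro k; rw [hsymm' a g k.1 k.2]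
        rw [Finset.prod_congr rfl (fun k _ => h1 k)]
        have h2 : (∀ k : Fin d, k ≠ i → score k (((Equiv.piSplitAt i fun k => Fin (m k + 1)).symm (a, g)) k) < score i a)
            ↔ ∀ k : {k : Fin d // k ≠ i}, score k.1 (g k) < score i a := by
          constructor
          · intro h k; rw [← hsymm' a g k.1 k.2]; exact h k.1 k.2
          · intro h k hk; rw [hsymm' a g k hk]; exact h ⟨k, hk⟩
        rw [if_congr h2 rfl rfl]
        have h3 : (if ∀ k : {k : Fin d // k ≠ i}, score k.1 (g k) < score i a then (1:ℝ) else 0)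
            = ∏ k : {k : Fin d // k ≠ i}, if score k.1 (g k) < score i a then (1:ℝ) else 0 := by
          rw [Finset.prod_boole]; simp
        rw [h3, mul_sub, ← Finset.prod_mul_distrib]
        congr 1
        · apply Finset.prod_congr rfl
          intro k _
          by_cases hs : score k.1 (g k) < score i a <;> simp [hs]
        · ring
      rw [Finset.sum_congr rfl (fun g _ => key g), Finset.sum_sub_distrib]
      congr 1
      rw [← Finset.mul_sum]
      have h4 : (∑ g : ∀ k : {k : Fin d // k ≠ i}, Fin (m k.1 + 1),
          ∏ k : {k : Fin d // k ≠ i}, x k.1 (g k)) = 1 := by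
        rw [← Fintype.piFinset_univ, ← Finset.prod_univ_sum]
        have : ∀ k : {k : Fin d // k ≠ i}, (∑ b, x k.1 b) = 1 := fun k => hx1 k.1
        rw [Finset.prod_congr rfl (fun k _ => this k)]
        simp
      rw [h4, mul_one]
    · rw [if_neg ha]
      apply Finset.sum_eq_zero
      intro g _
      rw [if_neg]
      rw [hsymm a g]
      exact ha
  rw [Finset.sum_congr rfl (fun a _ => step1 a), Finset.sum_ite_eq' Finset.univ j
    (fun a => (∑ g : ∀ k : {k : Fin d // k ≠ i}, Fin (m k.1 + 1),
            ∏ k : {k : Fin d // k ≠ i}, (if score k.1 (g k) < score i j then x k.1 (g k) else 0))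
          - c i j)]
  rw [if_pos (Finset.mem_univ j)]
  congr 1
  rw [← Fintype.piFinset_univ]
  rw [Finset.prod_subtype (Finset.univ.erase i) hmem (fun k => Fc score x k (score i j))]
  have hps := Finset.prod_univ_sum (fun _ : {k : Fin d // k ≠ i} => (Finset.univ : Finset (Fin (m _ + 1)))) (fun (k : {k : Fin d // k ≠ i}) b => if score k.1 b < score i j then x k.1 b else 0)
  simp only [Fc]
  exact hps.symm

lemma eqn (hx1 : ∀ i, ∑ j, x i j = 1) (i : Fin d) (j : Fin (m i + 1)) :
    (∏ k ∈ Finset.univ.erase i, Fc score x k (score i j))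
      = expPay d m score c x i j + c i j := by
  rw [expPay_eq' score c x hx1 i j]; ring

lemma payoff_le (hNE : ∀ (i : Fin d) (j j' : Fin (m i + 1)),
      expPay d m score c x i j > expPay d m score c x i j' → x i j' = 0) {i : Fin d} {j j' : Fin (m i + 1)} (h : x i j' ≠ 0) :
    expPay d m score c x i j ≤ expPay d m score c x i j' := by
  by_contra hlt
  exact h (hNE i j j' (lt_of_not_ge hlt))

lemma payoff_eq (hNE : ∀ (i : Fin d) (j j' : Fin (m i + 1)),
      expPay d m score c x i j > expPay d m score c x i j' → x i j' = 0) {i : Fin d} {j j' : Fin (m i + 1)} (h : x i j ≠ 0) (h' : x i j' ≠ 0) :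
    expPay d m score c x i j = expPay d m score c x i j' :=
  le_antisymm (payoff_le score c x hNE h') (payoff_le score c x hNE h)

lemma payoff_nonneg (hNE : ∀ (i : Fin d) (j j' : Fin (m i + 1)),
      expPay d m score c x i j > expPay d m score c x i j' → x i j' = 0) (hc0 : ∀ i, c i 0 = 0) (hx0 : ∀ i j, 0 ≤ x i j)
    (hx1 : ∀ i, ∑ j, x i j = 1)
    {i : Fin d} {j : Fin (m i + 1)} (h : x i j ≠ 0) :
    0 ≤ expPay d m score c x i j := by
  have h1 : expPay d m score c x i 0 ≤ expPay d m score c x i j :=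
    payoff_le score c x hNE h
  refine le_trans ?_ h1
  rw [expPay_eq' score c x hx1 i 0, hc0 i, sub_zero]
  exact Finset.prod_nonneg fun k _ => Fc_nonneg' score x hx0 k _

lemma event_eq (hties : Function.Injective fun p : Σ i : Fin d, Fin (m i + 1) => score p.1 p.2)
    {e e' : Σ i : Fin d, Fin (m i + 1)} (h : score e.1 e.2 = score e'.1 e'.2) : e = e' :=
  hties h

lemma key_below (hNE : ∀ (i : Fin d) (j j' : Fin (m i + 1)),
      expPay d m score c x i j > expPay d m score c x i j' → x i j' = 0) (hd : 2 ≤ d)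
    (hcost : ∀ i, StrictMono (c i)) (hc0 : ∀ i, c i 0 = 0)
    (hx1 : ∀ i, ∑ j, x i j = 1)
    {p : Fin d} {jp : Fin (m p + 1)} (hjp : x p jp ≠ 0)
    (hpos : 0 < expPay d m score c x p jp)
    {k : Fin d} (hk : k ≠ p) : ∃ jk, x k jk ≠ 0 ∧ score k jk < score p jp := by
  by_contra hcon
  push_neg at hcon
  have hFk : Fc score x k (score p jp) = 0 := by
    apply Fc_eq_zero₀
    intro jk hjk
    exact not_lt_of_ge (hcon jk hjk)
  have hprod : (∏ k' ∈ Finset.univ.erase p, Fc score x k' (score p jp)) = 0 :=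
    Finset.prod_eq_zero (Finset.mem_erase.mpr ⟨hk, Finset.mem_univ k⟩) hFk
  rw [eqn score c x hx1 p jp] at hprod
  have := cost_nonneg' c hcost hc0 p jp
  linarith

lemma payoff_rat (hNE : ∀ (i : Fin d) (j j' : Fin (m i + 1)),
      expPay d m score c x i j > expPay d m score c x i j' → x i j' = 0) (hd : 2 ≤ d)
    (hties : Function.Injective fun p : Σ i : Fin d, Fin (m i + 1) => score p.1 p.2)
    (hcost : ∀ i, StrictMono (c i)) (hc0 : ∀ i, c i 0 = 0) (hc1 : ∀ i j, c i j < 1)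
    (hcq : ∀ (i : Fin d) (j : Fin (m i + 1)), ∃ q : ℚ, c i j = (q : ℝ))
    (hx0 : ∀ i j, 0 ≤ x i j) (hx1 : ∀ i, ∑ j, x i j = 1) :
    ∀ (i : Fin d) (j : Fin (m i + 1)), x i j ≠ 0 → expPay d m score c x i j ∈ Krat := by
  classical
  have hd0 : 0 < d := lt_of_lt_of_le two_pos hd
  set S : Finset (Σ i : Fin d, Fin (m i + 1)) := Finset.univ.filter (fun e => x e.1 e.2 ≠ 0) with hS
  have hSmem : ∀ e : Σ i : Fin d, Fin (m i + 1), e ∈ S ↔ x e.1 e.2 ≠ 0 := by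
    intro e; simp [hS]
  have hSne : S.Nonempty := by
    obtain ⟨j0, hj0⟩ := exists_supp' x hx1 ⟨0, hd0⟩
    exact ⟨⟨⟨0, hd0⟩, j0⟩, (hSmem _).mpr hj0⟩
  obtain ⟨top, htopS, htopmax⟩ := Finset.exists_max_image S (fun e => score e.1 e.2) hSne
  obtain ⟨u, ju⟩ := top
  have hju : x u ju ≠ 0 := (hSmem _).mp htopS
  have hvtop : expPay d m score c x u ju = 1 - c u ju := by
    rw [expPay_eq' score c x hx1 u ju]
    congr 1
    apply Finset.prod_eq_one
    intro k hkmem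
    have hk : k ≠ u := (Finset.mem_erase.mp hkmem).1
    apply Fc_eq_one' score x hx1
    intro j' hj'
    have hmem : (⟨k, j'⟩ : Σ i : Fin d, Fin (m i + 1)) ∈ S := (hSmem _).mpr hj'
    have hle : score k j' ≤ score u ju := htopmax _ hmem
    rcases lt_or_eq_of_le hle with h | h
    · exact h
    · exfalso
      have := event_eq score hties (e := ⟨k, j'⟩) (e' := ⟨u, ju⟩) h
      exact hk (congrArg Sigma.fst this)
  intro i j hij
  by_cases hi : i = u
  · subst hi
    rw [payoff_eq score c x hNE hij hju, hvtop]
    obtain ⟨q, hq⟩ := hcq i ju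
    rw [hq]
    exact Krat.sub_mem Krat.one_mem (ratCast_mem_Krat q)
  · -- show payoff is zero
    have h0 : expPay d m score c x i j = 0 := by
      by_contra h0
      have hpos : 0 < expPay d m score c x i j :=
        lt_of_le_of_ne (payoff_nonneg score c x hNE hc0 hx0 hx1 hij) (Ne.symm h0)
      -- minimal supported event of player i
      have hne_i : (S.filter (fun e => e.1 = i)).Nonempty :=
        ⟨⟨i, j⟩, Finset.mem_filter.mpr ⟨(hSmem _).mpr hij, rfl⟩⟩
      obtain ⟨ei, heiS, heimin⟩ :=
        Finset.exists_min_image (S.filter (fun e => e.1 = i)) (fun e => score e.1 e.2) hne_i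
      obtain ⟨i', jmin⟩ := ei
      have hii : i' = i := (Finset.mem_filter.mp heiS).2
      subst hii
      have hjmin : x i' jmin ≠ 0 := (hSmem _).mp (Finset.mem_filter.mp heiS).1
      have hpmin : 0 < expPay d m score c x i' jmin := by
        rw [payoff_eq score c x hNE hjmin hij]; exact hpos
      -- minimal supported event of player u
      have hne_u : (S.filter (fun e => e.1 = u)).Nonempty :=
        ⟨⟨u, ju⟩, Finset.mem_filter.mpr ⟨htopS, rfl⟩⟩
      obtain ⟨eu, heuS, heumin⟩ :=
        Finset.exists_min_image (S.filter (fun e => e.1 = u)) (fun e => score e.1 e.2) hne_u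
      obtain ⟨u', jumin⟩ := eu
      have huu : u' = u := (Finset.mem_filter.mp heuS).2
      subst huu
      have hjumin : x u' jumin ≠ 0 := (hSmem _).mp (Finset.mem_filter.mp heuS).1
      have hpumin : 0 < expPay d m score c x u' jumin := by
        rw [payoff_eq score c x hNE hjumin hju, hvtop]
        linarith [hc1 u' ju]
      -- apply key_below both ways
      obtain ⟨ju2, hju2, hju2lt⟩ :=
        key_below score c x hNE hd hcost hc0 hx1 hjmin hpmin (k := u') (fun h => hi h.symm)
      obtain ⟨ji2, hji2, hji2lt⟩ :=
        key_below score c x hNE hd hcost hc0 hx1 hjumin hpumin (k := i') hi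
      have h1 : score i' jmin ≤ score i' ji2 :=
        heimin ⟨i', ji2⟩ (Finset.mem_filter.mpr ⟨(hSmem _).mpr hji2, rfl⟩)
      have h2 : score u' jumin ≤ score u' ju2 :=
        heumin ⟨u', ju2⟩ (Finset.mem_filter.mpr ⟨(hSmem _).mpr hju2, rfl⟩)
      linarith
    rw [h0]
    exact Krat.zero_mem


lemma adjacent_ne (hNE : ∀ (i : Fin d) (j j' : Fin (m i + 1)),
      expPay d m score c x i j > expPay d m score c x i j' → x i j' = 0)
    (hties : Function.Injective fun p : Σ i : Fin d, Fin (m i + 1) => score p.1 p.2)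
    (hcost : ∀ i, StrictMono (c i)) (hx1 : ∀ i, ∑ j, x i j = 1)
    {e e' : Σ i : Fin d, Fin (m i + 1)} (he : x e.1 e.2 ≠ 0) (he' : x e'.1 e'.2 ≠ 0)
    (hlt : score e'.1 e'.2 < score e.1 e.2)
    (hbet : ∀ b : Σ i : Fin d, Fin (m i + 1), x b.1 b.2 ≠ 0 →
      ¬(score e'.1 e'.2 < score b.1 b.2 ∧ score b.1 b.2 < score e.1 e.2)) :
    e.1 ≠ e'.1 := by
  obtain ⟨i, j⟩ := e
  obtain ⟨i2, j'⟩ := e'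
  intro h
  dsimp only at h hlt hbet he he' ⊢
  subst h
  have hFk : ∀ k ∈ Finset.univ.erase i, Fc score x k (score i j) = Fc score x k (score i j') := by
    intro k hkm
    have hk : k ≠ i := (Finset.mem_erase.mp hkm).1
    apply Fc_congr' score x
    intro j2 hj2
    constructor
    · intro hlt2
      by_contra hge
      have hne : score k j2 ≠ score i j' := by
        intro hh
        exact hk (congrArg Sigma.fst (event_eq score hties (e := ⟨k, j2⟩) (e' := ⟨i, j'⟩) hh))
      have hgt : score i j' < score k j2 := lt_of_le_of_ne (not_lt.mp hge) (Ne.symm hne)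
      exact hbet ⟨k, j2⟩ hj2 ⟨hgt, hlt2⟩
    · intro hlt2
      exact lt_trans hlt2 hlt
  have hprod : (∏ k ∈ Finset.univ.erase i, Fc score x k (score i j))
      = ∏ k ∈ Finset.univ.erase i, Fc score x k (score i j') :=
    Finset.prod_congr rfl hFk
  rw [eqn score c x hx1 i j, eqn score c x hx1 i j'] at hprod
  rw [payoff_eq score c x hNE he he'] at hprod
  have hc : c i j = c i j' := by linarith
  have : j = j' := (hcost i).injective hc
  subst this
  exact lt_irrefl _ hlt

lemma Fc_rat (hNE : ∀ (i : Fin d) (j j' : Fin (m i + 1)),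
      expPay d m score c x i j > expPay d m score c x i j' → x i j' = 0) (hd : 2 ≤ d)
    (hties : Function.Injective fun p : Σ i : Fin d, Fin (m i + 1) => score p.1 p.2)
    (hcost : ∀ i, StrictMono (c i)) (hc0 : ∀ i, c i 0 = 0) (hc1 : ∀ i j, c i j < 1)
    (hcq : ∀ (i : Fin d) (j : Fin (m i + 1)), ∃ q : ℚ, c i j = (q : ℝ))
    (hx0 : ∀ i j, 0 ≤ x i j) (hx1 : ∀ i, ∑ j, x i j = 1) :
    ∀ (n : ℕ) (e : Σ i : Fin d, Fin (m i + 1)), x e.1 e.2 ≠ 0 →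
      ((Finset.univ.filter (fun e' : Σ i : Fin d, Fin (m i + 1) =>
          x e'.1 e'.2 ≠ 0 ∧ score e.1 e.2 < score e'.1 e'.2)).card ≤ n) →
      ∀ k, k ≠ e.1 → Fc score x k (score e.1 e.2) ∈ Krat := by
  intro n
  induction n using Nat.strong_induction_on with
  | _ n IH =>
  intro e he hcard k hk
  have IH' : ∀ e' : Σ i : Fin d, Fin (m i + 1), x e'.1 e'.2 ≠ 0 →
      score e.1 e.2 < score e'.1 e'.2 →
      ∀ k', k' ≠ e'.1 → Fc score x k' (score e'.1 e'.2) ∈ Krat := by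
    intro e' he' hlt k' hk'
    have hsub : (Finset.univ.filter (fun b : Σ i : Fin d, Fin (m i + 1) =>
          x b.1 b.2 ≠ 0 ∧ score e'.1 e'.2 < score b.1 b.2))
        ⊆ (Finset.univ.filter (fun b : Σ i : Fin d, Fin (m i + 1) =>
          x b.1 b.2 ≠ 0 ∧ score e.1 e.2 < score b.1 b.2)).erase e' := by
      intro b hb
      rw [Finset.mem_filter] at hb
      refine Finset.mem_erase.mpr ⟨?_, Finset.mem_filter.mpr
        ⟨Finset.mem_univ _, hb.2.1, lt_trans hlt hb.2.2⟩⟩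
      intro hbe
      rw [hbe] at hb
      exact lt_irrefl _ hb.2.2
    have he'mem : e' ∈ Finset.univ.filter (fun b : Σ i : Fin d, Fin (m i + 1) =>
        x b.1 b.2 ≠ 0 ∧ score e.1 e.2 < score b.1 b.2) :=
      Finset.mem_filter.mpr ⟨Finset.mem_univ _, he', hlt⟩
    have hlt_card : (Finset.univ.filter (fun b : Σ i : Fin d, Fin (m i + 1) =>
        x b.1 b.2 ≠ 0 ∧ score e'.1 e'.2 < score b.1 b.2)).card
        < (Finset.univ.filter (fun b : Σ i : Fin d, Fin (m i + 1) =>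
        x b.1 b.2 ≠ 0 ∧ score e.1 e.2 < score b.1 b.2)).card :=
      lt_of_le_of_lt (Finset.card_le_card hsub) (Finset.card_erase_lt_of_mem he'mem)
    exact IH _ (lt_of_lt_of_le hlt_card hcard) e' he' le_rfl k' hk'
  have step : ∀ k', k' ≠ e.1 → ∀ b : Σ i : Fin d, Fin (m i + 1), x b.1 b.2 ≠ 0 →
      b.1 ≠ k' → score e.1 e.2 < score b.1 b.2 →
      (∀ j', x k' j' ≠ 0 → ¬(score e.1 e.2 ≤ score k' j' ∧ score k' j' < score b.1 b.2)) →
      Fc score x k' (score e.1 e.2) ∈ Krat := by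
    intro k' hk' b hb hbk hlt hnone
    have heqF : Fc score x k' (score e.1 e.2) = Fc score x k' (score b.1 b.2) := by
      apply Fc_congr' score x
      intro j2 hj2
      constructor
      · intro h; exact lt_trans h hlt
      · intro h
        by_contra hge
        exact hnone j2 hj2 ⟨not_lt.mp hge, h⟩
    rw [heqF]
    exact IH' b hb hlt k' (Ne.symm hbk)
  by_cases hAk : ∃ j', x k j' ≠ 0 ∧ score e.1 e.2 < score k j'
  · -- player k has supported actions above e
    obtain ⟨ja, hjamem, hjamin⟩ := Finset.exists_min_image
      (Finset.univ.filter (fun j' : Fin (m k + 1) => x k j' ≠ 0 ∧ score e.1 e.2 < score k j'))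
      (fun j' => score k j') (by
        obtain ⟨j', h1, h2⟩ := hAk
        exact ⟨j', Finset.mem_filter.mpr ⟨Finset.mem_univ _, h1, h2⟩⟩)
    have hja : x k ja ≠ 0 := (Finset.mem_filter.mp hjamem).2.1
    have hjalt : score e.1 e.2 < score k ja := (Finset.mem_filter.mp hjamem).2.2
    by_cases hbet : ∃ b : Σ i : Fin d, Fin (m i + 1), x b.1 b.2 ≠ 0 ∧
        score e.1 e.2 < score b.1 b.2 ∧ score b.1 b.2 < score k ja
    · -- case 2a : some event strictly between e and a
      obtain ⟨b, hb, hblt1, hblt2⟩ := hbet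
      have hbk : b.1 ≠ k := by
        intro hh
        obtain ⟨kb, jb⟩ := b
        dsimp only at hh hblt1 hblt2 hb
        subst hh
        have : jb ∈ Finset.univ.filter
            (fun j' : Fin (m kb + 1) => x kb j' ≠ 0 ∧ score e.1 e.2 < score kb j') :=
          Finset.mem_filter.mpr ⟨Finset.mem_univ _, hb, hblt1⟩
        exact absurd (hjamin jb this) (not_le.mpr hblt2)
      apply step k hk b hb hbk hblt1
      intro j' hj' ⟨hge, hlt'⟩
      rcases lt_or_eq_of_le hge with hgt | heq
      · have : j' ∈ Finset.univ.filter
            (fun j'' : Fin (m k + 1) => x k j'' ≠ 0 ∧ score e.1 e.2 < score k j'') :=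
          Finset.mem_filter.mpr ⟨Finset.mem_univ _, hj', hgt⟩
        have := hjamin j' this
        linarith
      · exact hk (congrArg Sigma.fst (event_eq score hties (e := ⟨k, j'⟩) (e' := e) heq.symm))
    · -- case 2b : a is the immediate next event above e
      push_neg at hbet
      have hkmem : k ∈ Finset.univ.erase e.1 := Finset.mem_erase.mpr ⟨hk, Finset.mem_univ k⟩
      have hfactor : ∀ k' ∈ (Finset.univ.erase e.1).erase k,
          Fc score x k' (score e.1 e.2) ∈ Krat := by
        intro k' hk'mem
        have hk'k : k' ≠ k := (Finset.mem_erase.mp hk'mem).1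
        have hk'e : k' ≠ e.1 := (Finset.mem_erase.mp (Finset.mem_erase.mp hk'mem).2).1
        apply step k' hk'e ⟨k, ja⟩ hja (Ne.symm hk'k) hjalt
        intro j' hj' ⟨hge, hlt'⟩
        rcases lt_or_eq_of_le hge with hgt | heq
        · exact absurd hlt' (not_lt.mpr (hbet ⟨k', j'⟩ hj' hgt))
        · exact hk'e (congrArg Sigma.fst (event_eq score hties (e := ⟨k', j'⟩) (e' := e) heq.symm))
      have hR : (∏ k' ∈ (Finset.univ.erase e.1).erase k, Fc score x k' (score e.1 e.2)) ∈ Krat :=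
        Subfield.prod_mem Krat hfactor
      have heqn := eqn score c x hx1 e.1 e.2
      rw [← Finset.mul_prod_erase (Finset.univ.erase e.1)
        (fun k' => Fc score x k' (score e.1 e.2)) hkmem] at heqn
      have hrhs : expPay d m score c x e.1 e.2 + c e.1 e.2 ∈ Krat := by
        apply Subfield.add_mem
        · exact payoff_rat score c x hNE hd hties hcost hc0 hc1 hcq hx0 hx1 e.1 e.2 he
        · obtain ⟨q, hq⟩ := hcq e.1 e.2
          rw [hq]; exact ratCast_mem_Krat q
      by_cases hR0 : (∏ k' ∈ (Finset.univ.erase e.1).erase k, Fc score x k' (score e.1 e.2)) = 0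
      · -- zero case
        obtain ⟨l, hlmem, hl0⟩ := Finset.prod_eq_zero_iff.mp hR0
        have hlk : l ≠ k := (Finset.mem_erase.mp hlmem).1
        have hle : l ≠ e.1 := (Finset.mem_erase.mp (Finset.mem_erase.mp hlmem).2).1
        have hlup : ∀ j', x l j' ≠ 0 → score k ja < score l j' := by
          intro j' hj'
          have h1 : ¬ score l j' < score e.1 e.2 := Fc_eq_zero'' score x hx0 hl0 j' hj'
          rcases lt_trichotomy (score l j') (score k ja) with h | h | h
          · exfalso
            rcases lt_or_eq_of_le (not_lt.mp h1) with hgt | heq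
            · exact absurd h (not_lt.mpr (hbet ⟨l, j'⟩ hj' hgt))
            · exact hle (congrArg Sigma.fst (event_eq score hties (e := ⟨l, j'⟩) (e' := e) heq.symm))
          · exact absurd (congrArg Sigma.fst (event_eq score hties
              (e := ⟨l, j'⟩) (e' := ⟨k, ja⟩) h)) hlk
          · exact h
        by_cases hC : ∃ j', x k j' ≠ 0 ∧ score k j' < score e.1 e.2
        · exfalso
          obtain ⟨jc, hjc, hjclt⟩ := hC
          -- equation at a
          have hFla : Fc score x l (score k ja) = 0 :=
            Fc_eq_zero₀ score x (fun j' hj' => not_lt_of_ge (le_of_lt (hlup j' hj')))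
          have hproda : (∏ k' ∈ Finset.univ.erase k, Fc score x k' (score k ja)) = 0 :=
            Finset.prod_eq_zero (Finset.mem_erase.mpr ⟨hlk, Finset.mem_univ l⟩) hFla
          rw [eqn score c x hx1 k ja] at hproda
          have hpa := payoff_nonneg score c x hNE hc0 hx0 hx1 hja
          have hca := cost_nonneg' c hcost hc0 k ja
          have hcaz : c k ja = 0 := by linarith
          have hja0 : ja = 0 := by
            by_contra hne
            exact absurd hcaz (ne_of_gt (cost_pos' c hcost hc0 hne))
          -- equation at jc
          have hFlc : Fc score x l (score k jc) = 0 := by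
            apply Fc_eq_zero₀ score x
            intro j' hj'
            have := hlup j' hj'
            intro hcon
            linarith
          have hprodc : (∏ k' ∈ Finset.univ.erase k, Fc score x k' (score k jc)) = 0 :=
            Finset.prod_eq_zero (Finset.mem_erase.mpr ⟨hlk, Finset.mem_univ l⟩) hFlc
          rw [eqn score c x hx1 k jc] at hprodc
          have hpc := payoff_nonneg score c x hNE hc0 hx0 hx1 hjc
          have hcc := cost_nonneg' c hcost hc0 k jc
          have hccz : c k jc = 0 := by linarith
          have hjc0 : jc = 0 := by
            by_contra hne
            exact absurd hccz (ne_of_gt (cost_pos' c hcost hc0 hne))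
          rw [hja0] at hjalt
          rw [hjc0] at hjclt
          linarith
        · push_neg at hC
          have : Fc score x k (score e.1 e.2) = 0 :=
            Fc_eq_zero₀ score x (fun j' hj' => not_lt.mpr (hC j' hj'))
          rw [this]
          exact Krat.zero_mem
      · -- division case
        have hFk : Fc score x k (score e.1 e.2)
            = (expPay d m score c x e.1 e.2 + c e.1 e.2)
              / (∏ k' ∈ (Finset.univ.erase e.1).erase k, Fc score x k' (score e.1 e.2)) :=
          (eq_div_iff hR0).mpr heqn
        rw [hFk]
        exact Subfield.div_mem Krat hrhs hR
  · -- no supported action of k above e : Fc = 1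
    push_neg at hAk
    have : Fc score x k (score e.1 e.2) = 1 := by
      apply Fc_eq_one' score x hx1
      intro j' hj'
      rcases lt_or_eq_of_le (hAk j' hj') with h | h
      · exact h
      · exact absurd (congrArg Sigma.fst (event_eq score hties (e := ⟨k, j'⟩) (e' := e) h)) hk
    rw [this]
    exact Krat.one_mem


end RankAux

open RankAux in
/-- if all costs are rational then in every Nash equilibrium all
probabilities are rational. -/
theorem equilibrium_probabilities_rational (d : ℕ) (hd : 2 ≤ d) (m : Fin d → ℕ)
    (score c : ∀ i : Fin d, Fin (m i + 1) → ℝ)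
    (hscore : ∀ i, StrictMono (score i)) (hcost : ∀ i, StrictMono (c i))
    (hties : Function.Injective fun p : Σ i : Fin d, Fin (m i + 1) => score p.1 p.2)
    (hc0 : ∀ i, c i 0 = 0) (hc1 : ∀ i j, c i j < 1)
    (hcq : ∀ (i : Fin d) (j : Fin (m i + 1)), ∃ q : ℚ, c i j = (q : ℝ))
    (x : ∀ i : Fin d, Fin (m i + 1) → ℝ)
    (hx0 : ∀ i j, 0 ≤ x i j) (hx1 : ∀ i, ∑ j, x i j = 1)
    (hNE : ∀ (i : Fin d) (j j' : Fin (m i + 1)),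
      expPay d m score c x i j > expPay d m score c x i j' → x i j' = 0) :
    ∀ (i : Fin d) (j : Fin (m i + 1)), ∃ q : ℚ, x i j = (q : ℝ) := by
  classical
  intro i j
  by_cases hx : x i j = 0
  · exact ⟨0, by rw [hx]; simp⟩
  have Q : ∀ b : Σ i : Fin d, Fin (m i + 1), x b.1 b.2 ≠ 0 →
      ∀ k, k ≠ b.1 → Fc score x k (score b.1 b.2) ∈ Krat := by
    intro b hb k hk
    exact Fc_rat score c x hNE hd hties hcost hc0 hc1 hcq hx0 hx1 _ b hb le_rfl k hk
  -- lower value : Fc i (score i j) is rational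
  have Lb : Fc score x i (score i j) ∈ Krat := by
    by_cases hbelow : ∃ j', x i j' ≠ 0 ∧ score i j' < score i j
    · obtain ⟨j2, hj2mem, hj2max⟩ := Finset.exists_max_image
        (Finset.univ.filter (fun j' : Fin (m i + 1) => x i j' ≠ 0 ∧ score i j' < score i j))
        (fun j' => score i j') (by
          obtain ⟨j', h1, h2⟩ := hbelow
          exact ⟨j', Finset.mem_filter.mpr ⟨Finset.mem_univ _, h1, h2⟩⟩)
      have hj2x : x i j2 ≠ 0 := (Finset.mem_filter.mp hj2mem).2.1
      have hj2lt : score i j2 < score i j := (Finset.mem_filter.mp hj2mem).2.2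
      by_cases hbet : ∃ b : Σ i : Fin d, Fin (m i + 1), x b.1 b.2 ≠ 0 ∧
          score i j2 < score b.1 b.2 ∧ score b.1 b.2 < score i j
      · obtain ⟨b, hb, hb1, hb2⟩ := hbet
        have hbi : b.1 ≠ i := by
          intro hh
          obtain ⟨kb, jb⟩ := b
          dsimp only at hh hb1 hb2 hb
          subst hh
          have : jb ∈ Finset.univ.filter
              (fun j' : Fin (m kb + 1) => x kb j' ≠ 0 ∧ score kb j' < score kb j) :=
            Finset.mem_filter.mpr ⟨Finset.mem_univ _, hb, hb2⟩
          exact absurd (hj2max jb this) (not_le.mpr hb1)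
        have heqF : Fc score x i (score i j) = Fc score x i (score b.1 b.2) := by
          apply Fc_congr' score x
          intro j' hj'
          constructor
          · intro h
            have : j' ∈ Finset.univ.filter
                (fun j'' : Fin (m i + 1) => x i j'' ≠ 0 ∧ score i j'' < score i j) :=
              Finset.mem_filter.mpr ⟨Finset.mem_univ _, hj', h⟩
            exact lt_of_le_of_lt (hj2max j' this) hb1
          · intro h
            exact lt_trans h hb2
        rw [heqF]
        exact Q b hb i (Ne.symm hbi)
      · exfalso
        push_neg at hbet
        have := adjacent_ne score c x hNE hties hcost hx1
          (e := ⟨i, j⟩) (e' := ⟨i, j2⟩) hx hj2x hj2lt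
          (fun b hb => by
            intro ⟨h1, h2⟩
            exact absurd h2 (not_lt.mpr (hbet b hb h1)))
        exact this rfl
    · push_neg at hbelow
      have : Fc score x i (score i j) = 0 :=
        Fc_eq_zero₀ score x (fun j' hj' => not_lt.mpr (hbelow j' hj'))
      rw [this]
      exact Krat.zero_mem
  -- now the mass itself
  have hmass : x i j ∈ Krat := by
    by_cases habove : ∃ j', x i j' ≠ 0 ∧ score i j < score i j'
    · obtain ⟨j2, hj2mem, hj2min⟩ := Finset.exists_min_image
        (Finset.univ.filter (fun j' : Fin (m i + 1) => x i j' ≠ 0 ∧ score i j < score i j'))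
        (fun j' => score i j') (by
          obtain ⟨j', h1, h2⟩ := habove
          exact ⟨j', Finset.mem_filter.mpr ⟨Finset.mem_univ _, h1, h2⟩⟩)
      have hj2x : x i j2 ≠ 0 := (Finset.mem_filter.mp hj2mem).2.1
      have hj2gt : score i j < score i j2 := (Finset.mem_filter.mp hj2mem).2.2
      obtain ⟨b, hb, hb1, hb2⟩ : ∃ b : Σ i : Fin d, Fin (m i + 1), x b.1 b.2 ≠ 0 ∧
          score i j < score b.1 b.2 ∧ score b.1 b.2 < score i j2 := by
        by_contra hbet
        push_neg at hbet
        have := adjacent_ne score c x hNE hties hcost hx1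
          (e := ⟨i, j2⟩) (e' := ⟨i, j⟩) hj2x hx hj2gt
          (fun b hb => by
            intro ⟨h1, h2⟩
            exact absurd h2 (not_lt.mpr (hbet b hb h1)))
        exact this rfl
      have hbi : b.1 ≠ i := by
        intro hh
        obtain ⟨kb, jb⟩ := b
        dsimp only at hh hb1 hb2 hb
        subst hh
        have : jb ∈ Finset.univ.filter
            (fun j' : Fin (m kb + 1) => x kb j' ≠ 0 ∧ score kb j < score kb j') :=
          Finset.mem_filter.mpr ⟨Finset.mem_univ _, hb, hb1⟩
        exact absurd (hj2min jb this) (not_le.mpr hb2)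
      -- Fc i (score b) = Fc i (score i j) + x i j
      have hsplit : Fc score x i (score b.1 b.2)
          = Fc score x i (score i j) + x i j := by
        rw [Fc, Fc]
        rw [show (∑ j', if score i j' < score b.1 b.2 then x i j' else 0)
            = ∑ j', ((if score i j' < score i j then x i j' else 0)
              + (if j' = j then x i j else 0)) from ?_, Finset.sum_add_distrib,
          Finset.sum_ite_eq' Finset.univ j (fun _ => x i j), if_pos (Finset.mem_univ j)]
        apply Finset.sum_congr rfl
        intro j' _
        by_cases hxj' : x i j' = 0
        · have hj'j : j' ≠ j := fun h => hx (h ▸ hxj')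
          simp [hxj', hj'j]
        · by_cases hj'j : j' = j
          · subst hj'j
            rw [if_pos hb1, if_neg (lt_irrefl _), if_pos rfl, zero_add]
          · rw [if_neg hj'j, add_zero]
            have hiff : score i j' < score b.1 b.2 ↔ score i j' < score i j := by
              constructor
              · intro h
                by_contra hge
                rcases lt_or_eq_of_le (not_lt.mp hge) with hgt | heq
                · have : j' ∈ Finset.univ.filter
                      (fun j'' : Fin (m i + 1) => x i j'' ≠ 0 ∧ score i j < score i j'') :=
                    Finset.mem_filter.mpr ⟨Finset.mem_univ _, hxj', hgt⟩
                  have := hj2min j' this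
                  linarith
                · have := event_eq score hties (e := ⟨i, j⟩) (e' := ⟨i, j'⟩) heq
                  rw [Sigma.mk.inj_iff] at this
                  exact hj'j (eq_of_heq this.2).symm
              · intro h
                exact lt_trans h hb1
            rw [if_congr hiff rfl rfl]
      have hxval : x i j = Fc score x i (score b.1 b.2) - Fc score x i (score i j) := by
        rw [hsplit]; ring
      rw [hxval]
      exact Krat.sub_mem (Q b hb i (Ne.symm hbi)) Lb
    · push_neg at habove
      have hsum : (1:ℝ) = Fc score x i (score i j) + x i j := by
        rw [← hx1 i, Fc]
        rw [show (∑ j', x i j')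
            = ∑ j', ((if score i j' < score i j then x i j' else 0)
              + (if j' = j then x i j else 0)) from ?_, Finset.sum_add_distrib,
          Finset.sum_ite_eq' Finset.univ j (fun _ => x i j), if_pos (Finset.mem_univ j)]
        apply Finset.sum_congr rfl
        intro j' _
        by_cases hxj' : x i j' = 0
        · have hj'j : j' ≠ j := fun h => hx (h ▸ hxj')
          simp [hxj', hj'j]
        · by_cases hj'j : j' = j
          · subst hj'j
            rw [if_neg (lt_irrefl _), if_pos rfl, zero_add]
          · rw [if_neg hj'j, add_zero]
            have hlt : score i j' < score i j := by
              rcases lt_or_eq_of_le (habove j' hxj') with h | h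
              · exact h
              · exfalso
                have := event_eq score hties (e := ⟨i, j'⟩) (e' := ⟨i, j⟩) h
                rw [Sigma.mk.inj_iff] at this
                exact hj'j (eq_of_heq this.2)
            rw [if_pos hlt]
      have hxval : x i j = 1 - Fc score x i (score i j) := by linarith
      rw [hxval]
      exact Krat.sub_mem Krat.one_mem Lb
  rw [mem_Krat_iff] at hmass
  exact hmass
end

section
/- Consider a 2-player competitiveness-based ranking game without ties with a single prize, where the row player has strategies a_1,…,a_n with scores s_1 < … < s_n and strictly increasing costs, the column player has strategies a′_1,…,a′_{n′} with scores s′_1 < … < s′_{n′} and strictly increasing costs, and the strategies interleave in strength: s_j < s′_j whenever both are defined, and s′_j < s_{j+1} whenever both are defined. Let (x, y) be any Nash equilibrium, where x is the row player's distribution over a_1,…,a_n and y the column player's distribution over a′_1,…,a′_{n′}. Then: (i) for every j with 2 ≤ j ≤ min(n, n′), if x_j = 0 then y_j = 0; and (ii) for every j with 1 ≤ j ≤ n′ and j + 1 ≤ n, if y_j = 0 then x_{j+1} = 0. -/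
open Finset
open scoped Classical

/-- in a 2-player single-prize competitiveness-based ranking game
without ties whose strategies interleave in strength
(`s 1 < s' 1 < s 2 < s' 2 < …`, 1-indexed; here 0-indexed), in any Nash
equilibrium: (i) if the row player does not use his (j+1)-st strategy (j ≥ 1,
0-indexed index j) then the column player does not use his (j+1)-st strategy;
and (ii) if the column player does not use his (j+1)-st strategy then the row
player does not use his (j+2)-nd strategy. -/
theorem two_player_no_ties_support_structure (n n' : ℕ)
    (s c : Fin n → ℝ) (s' c' : Fin n' → ℝ)
    (hs : StrictMono s) (hs' : StrictMono s')
    (hc : StrictMono c) (hc' : StrictMono c')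
    (hint1 : ∀ (j : ℕ) (hjn : j < n) (hjn' : j < n'), s ⟨j, hjn⟩ < s' ⟨j, hjn'⟩)
    (hint2 : ∀ (j : ℕ) (hjn' : j < n') (hjn : j + 1 < n), s' ⟨j, hjn'⟩ < s ⟨j + 1, hjn⟩)
    (x : Fin n → ℝ) (y : Fin n' → ℝ)
    (hx0 : ∀ j, 0 ≤ x j) (hx1 : ∑ j, x j = 1)
    (hy0 : ∀ k, 0 ≤ y k) (hy1 : ∑ k, y k = 1)
    (hNErow : ∀ j j' : Fin n,
      (∑ k, y k * ((if s' k < s j then (1 : ℝ) else 0) - c j)) >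
        (∑ k, y k * ((if s' k < s j' then (1 : ℝ) else 0) - c j')) → x j' = 0)
    (hNEcol : ∀ k k' : Fin n',
      (∑ j, x j * ((if s j < s' k then (1 : ℝ) else 0) - c' k)) >
        (∑ j, x j * ((if s j < s' k' then (1 : ℝ) else 0) - c' k')) → y k' = 0) :
    (∀ (j : ℕ) (hj : 1 ≤ j) (hjn : j < n) (hjn' : j < n'),
        x ⟨j, hjn⟩ = 0 → y ⟨j, hjn'⟩ = 0) ∧
    (∀ (j : ℕ) (hjn' : j < n') (hjn : j + 1 < n),
        y ⟨j, hjn'⟩ = 0 → x ⟨j + 1, hjn⟩ = 0) := by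
  -- indicator rewrites
  have hrow : ∀ (k : Fin n') (j : Fin n),
      (if s' k < s j then (1:ℝ) else 0) = if (k:ℕ) < (j:ℕ) then 1 else 0 := by
    intro k j
    by_cases h : (k:ℕ) < (j:ℕ)
    · have hk1 : (k:ℕ) + 1 < n := lt_of_le_of_lt h j.2
      have h1 : s' k < s ⟨(k:ℕ)+1, hk1⟩ := by
        have := hint2 (k:ℕ) k.2 hk1
        simpa using this
      have h2 : s ⟨(k:ℕ)+1, hk1⟩ ≤ s j := hs.monotone (by simp [Fin.le_def]; omega)
      rw [if_pos (lt_of_lt_of_le h1 h2), if_pos h]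
    · have hjn' : (j:ℕ) < n' := lt_of_le_of_lt (le_of_not_gt h) k.2
      have h1 : s j < s' ⟨(j:ℕ), hjn'⟩ := by
        have := hint1 (j:ℕ) j.2 hjn'
        simpa using this
      have h2 : s' ⟨(j:ℕ), hjn'⟩ ≤ s' k := hs'.monotone (by simp [Fin.le_def]; omega)
      rw [if_neg (not_lt.2 (le_of_lt (lt_of_lt_of_le h1 h2))), if_neg h]
  have hcol : ∀ (i : Fin n) (k : Fin n'),
      (if s i < s' k then (1:ℝ) else 0) = if (i:ℕ) ≤ (k:ℕ) then 1 else 0 := by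
    intro i k
    by_cases h : (i:ℕ) ≤ (k:ℕ)
    · have hin' : (i:ℕ) < n' := lt_of_le_of_lt h k.2
      have h1 : s i < s' ⟨(i:ℕ), hin'⟩ := by
        have := hint1 (i:ℕ) i.2 hin'
        simpa using this
      have h2 : s' ⟨(i:ℕ), hin'⟩ ≤ s' k := hs'.monotone (by simp [Fin.le_def]; omega)
      rw [if_pos (lt_of_lt_of_le h1 h2), if_pos h]
    · have hk1 : (k:ℕ) + 1 < n := by omega
      have h1 : s' k < s ⟨(k:ℕ)+1, hk1⟩ := by
        have := hint2 (k:ℕ) k.2 hk1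
        simpa using this
      have h2 : s ⟨(k:ℕ)+1, hk1⟩ ≤ s i := hs.monotone (by simp [Fin.le_def]; omega)
      rw [if_neg (not_lt.2 (le_of_lt (lt_of_lt_of_le h1 h2))), if_neg h]
  constructor
  · -- part (i)
    intro j hj hjn hjn' hxj
    have hj1n' : j - 1 < n' := by omega
    apply hNEcol ⟨j-1, hj1n'⟩ ⟨j, hjn'⟩
    have key : (∑ i, x i * ((if s i < s' ⟨j-1, hj1n'⟩ then (1:ℝ) else 0) - c' ⟨j-1, hj1n'⟩))
        - (∑ i, x i * ((if s i < s' ⟨j, hjn'⟩ then (1:ℝ) else 0) - c' ⟨j, hjn'⟩))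
        = (c' ⟨j, hjn'⟩ - c' ⟨j-1, hj1n'⟩) - x ⟨j, hjn⟩ := by
      rw [← Finset.sum_sub_distrib]
      have hterm : ∀ i : Fin n,
          x i * ((if s i < s' ⟨j-1, hj1n'⟩ then (1:ℝ) else 0) - c' ⟨j-1, hj1n'⟩)
          - x i * ((if s i < s' ⟨j, hjn'⟩ then (1:ℝ) else 0) - c' ⟨j, hjn'⟩)
          = x i * (c' ⟨j, hjn'⟩ - c' ⟨j-1, hj1n'⟩) - (if i = ⟨j, hjn⟩ then x i else 0) := by
        intro i
        rw [hcol i ⟨j-1, hj1n'⟩, hcol i ⟨j, hjn'⟩]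
        simp only [Fin.ext_iff]
        by_cases hi : (i:ℕ) = j
        · rw [if_neg (by omega), if_pos (by omega), if_pos hi]
          ring
        · by_cases h2 : (i:ℕ) ≤ j - 1
          · rw [if_pos h2, if_pos (by omega), if_neg hi]; ring
          · rw [if_neg h2, if_neg (by omega), if_neg hi]; ring
      rw [Finset.sum_congr rfl (fun i _ => hterm i), Finset.sum_sub_distrib,
        ← Finset.sum_mul, hx1, Finset.sum_ite_eq' Finset.univ ⟨j, hjn⟩ x]
      simp
    have hcpos : c' ⟨j-1, hj1n'⟩ < c' ⟨j, hjn'⟩ := hc' (by simp [Fin.lt_def]; omega)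
    rw [hxj] at key
    linarith
  · -- part (ii)
    intro j hjn' hjn hyj
    have hjlt : j < n := by omega
    apply hNErow ⟨j, hjlt⟩ ⟨j+1, hjn⟩
    have key : (∑ k, y k * ((if s' k < s ⟨j, hjlt⟩ then (1:ℝ) else 0) - c ⟨j, hjlt⟩))
        - (∑ k, y k * ((if s' k < s ⟨j+1, hjn⟩ then (1:ℝ) else 0) - c ⟨j+1, hjn⟩))
        = (c ⟨j+1, hjn⟩ - c ⟨j, hjlt⟩) - y ⟨j, hjn'⟩ := by
      rw [← Finset.sum_sub_distrib]
      have hterm : ∀ k : Fin n',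
          y k * ((if s' k < s ⟨j, hjlt⟩ then (1:ℝ) else 0) - c ⟨j, hjlt⟩)
          - y k * ((if s' k < s ⟨j+1, hjn⟩ then (1:ℝ) else 0) - c ⟨j+1, hjn⟩)
          = y k * (c ⟨j+1, hjn⟩ - c ⟨j, hjlt⟩) - (if k = ⟨j, hjn'⟩ then y k else 0) := by
        intro k
        rw [hrow k ⟨j, hjlt⟩, hrow k ⟨j+1, hjn⟩]
        simp only [Fin.ext_iff]
        by_cases hk : (k:ℕ) = j
        · rw [if_neg (by omega), if_pos (by omega), if_pos hk]
          ring
        · by_cases h2 : (k:ℕ) < j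
          · rw [if_pos h2, if_pos (by omega), if_neg hk]; ring
          · rw [if_neg h2, if_neg (by omega), if_neg hk]; ring
      rw [Finset.sum_congr rfl (fun k _ => hterm k), Finset.sum_sub_distrib,
        ← Finset.sum_mul, hy1, Finset.sum_ite_eq' Finset.univ ⟨j, hjn'⟩ y]
      simp
    have hcpos : c ⟨j, hjlt⟩ < c ⟨j+1, hjn⟩ := hc (by simp [Fin.lt_def])
    rw [hyj] at key
    linarith
end

section
/- Every 2-action score-symmetric competitiveness-based ranking game has a pure Nash equilibrium. That is: let there be d ≥ 2 players, each with two actions a_1 (cost c^i_1 = 0 for every player i) and a_2 (cost c^i_2 > 0 for player i), with a_2 having strictly higher score than a_1, and prizes u_1 ≥ u_2 ≥ … ≥ u_d with u_1 > u_d, where in a pure profile in which exactly k players play a_2 with 1 ≤ k ≤ d−1, each a_2-player receives (u_1 + … + u_k)/k minus his cost of a_2 and each a_1-player receives (u_{k+1} + … + u_d)/(d−k); if k = 0 or k = d all players share equally, receiving (u_1 + … + u_d)/d minus their chosen action's cost. Then there exists a pure-strategy profile from which no player can strictly increase his payoff by unilaterally switching his action. -/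
open Finset
open scoped Classical

/-- Payoff in the 2-action score-symmetric ranking game: `t i = true` means
player `i` plays the stronger action `a₂` (with player-specific cost `c i`),
`t i = false` means he plays the weaker action `a₁` (cost 0).  If `k` players
play `a₂`, each of them shares the top `k` prizes (getting
`(u₁ + … + u_k)/k` minus his cost) and each `a₁`-player shares the remaining
prizes (getting `(u_{k+1} + … + u_d)/(d-k)`); this formula also covers the
cases `k = 0` and `k = d`, where everyone gets `(u₁ + … + u_d)/d` minus the
cost of his chosen action. -/
noncomputable def payTwo (d : ℕ) (u : Fin d → ℝ) (c : Fin d → ℝ)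
    (t : Fin d → Bool) (i : Fin d) : ℝ :=
  if t i then
    (∑ l : Fin d, if (l : ℕ) < (Finset.univ.filter fun p => t p = true).card then u l else 0) /
      (((Finset.univ.filter fun p => t p = true).card : ℕ) : ℝ) - c i
  else
    (∑ l : Fin d, if (Finset.univ.filter fun p => t p = true).card ≤ (l : ℕ) then u l else 0) /
      ((d : ℝ) - (((Finset.univ.filter fun p => t p = true).card : ℕ) : ℝ))

/-- top-`k` prize sum -/
noncomputable def Ssum (d : ℕ) (u : Fin d → ℝ) (k : ℕ) : ℝ :=
  ∑ l : Fin d, if (l : ℕ) < k then u l else 0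

/-- bottom prize sum (ranks `k+1 … d`, i.e. indices `≥ k`) -/
noncomputable def Rsum (d : ℕ) (u : Fin d → ℝ) (k : ℕ) : ℝ :=
  ∑ l : Fin d, if k ≤ (l : ℕ) then u l else 0

/-- cost threshold at level `k` -/
noncomputable def gthr (d : ℕ) (u : Fin d → ℝ) (k : ℕ) : ℝ :=
  Ssum d u k / (k : ℝ) - Rsum d u (k - 1) / ((d : ℝ) - ((k - 1 : ℕ) : ℝ))

lemma card_filter_val_lt (d k : ℕ) (hk : k ≤ d) :
    (Finset.univ.filter fun j : Fin d => (j : ℕ) < k).card = k := by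
  apply Finset.card_eq_of_bijective (fun m hm => (⟨m, lt_of_lt_of_le hm hk⟩ : Fin d))
  · intro a ha
    have : (a : ℕ) < k := by simpa using ha
    exact ⟨a, this, by simp⟩
  · intro m hm
    simp [hm]
  · intro m n hm hn h
    simpa [Fin.ext_iff] using h

lemma card_filter_perm (d k : ℕ) (σ : Equiv.Perm (Fin d)) (hk : k ≤ d) :
    (Finset.univ.filter fun p : Fin d => (decide ((σ.symm p : ℕ) < k)) = true).card = k := by
  have h1 : (Finset.univ.filter fun p : Fin d => (decide ((σ.symm p : ℕ) < k)) = true) =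
      (Finset.univ.filter fun j : Fin d => (j : ℕ) < k).map σ.toEmbedding := by
    ext p
    simp only [Finset.mem_map, Finset.mem_filter, Finset.mem_univ, true_and,
      decide_eq_true_eq, Equiv.coe_toEmbedding]
    constructor
    · intro h; exact ⟨σ.symm p, h, by simp⟩
    · rintro ⟨j, hj, rfl⟩; simpa using hj
  rw [h1, Finset.card_map, card_filter_val_lt d k hk]

lemma filter_update_false (d : ℕ) (t : Fin d → Bool) (i : Fin d) (hi : t i = true) :
    (Finset.univ.filter fun p : Fin d => Function.update t i false p = true) =
      (Finset.univ.filter fun p : Fin d => t p = true).erase i := by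
  ext p
  by_cases hp : p = i <;> simp [Function.update, hp, hi]

lemma filter_update_true (d : ℕ) (t : Fin d → Bool) (i : Fin d) (hi : t i = false) :
    (Finset.univ.filter fun p : Fin d => Function.update t i true p = true) =
      insert i (Finset.univ.filter fun p : Fin d => t p = true) := by
  ext p
  by_cases hp : p = i <;> simp [Function.update, hp, hi]

/-- every 2-action score-symmetric competitiveness-based ranking
game has a pure Nash equilibrium. -/
theorem two_action_score_symmetric_pure_NE (d : ℕ) (hd : 2 ≤ d)
    (u : Fin d → ℝ) (hu : Antitone u) (hud : u ⟨d - 1, by omega⟩ < u ⟨0, by omega⟩)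
    (c : Fin d → ℝ) (hc : ∀ i, 0 < c i) :
    ∃ t : Fin d → Bool, ∀ (i : Fin d) (b : Bool),
      payTwo d u c (Function.update t i b) i ≤ payTwo d u c t i := by
  -- sort the players by cost
  set σ : Equiv.Perm (Fin d) := Tuple.sort c with hσ
  have hmono : Monotone (c ∘ σ) := Tuple.monotone_sort c
  -- the threshold predicate
  set P : ℕ → Prop := fun k =>
    ∃ j : Fin d, (j : ℕ) = k - 1 ∧ 0 < k ∧ c (σ j) ≤ gthr d u k with hP
  set K : ℕ := Nat.findGreatest P d with hK
  have hKd : K ≤ d := Nat.findGreatest_le d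
  -- the equilibrium profile: the K cheapest players play a₂
  refine ⟨fun p => decide ((σ.symm p : ℕ) < K), ?_⟩
  set t : Fin d → Bool := fun p => decide ((σ.symm p : ℕ) < K) with ht
  have hcard : (Finset.univ.filter fun p : Fin d => t p = true).card = K :=
    card_filter_perm d K σ hKd
  intro i b
  by_cases hi : (σ.symm i : ℕ) < K
  · -- player i plays a₂
    have hti : t i = true := by simp [ht, hi]
    have hK1 : 1 ≤ K := by omega
    -- his cost is at most gthr K
    have hcost : c i ≤ gthr d u K := by
      have hPK : P K := Nat.findGreatest_of_ne_zero hK.symm (by omega)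
      obtain ⟨j, hj1, _, hj3⟩ := hPK
      have : c (σ (σ.symm i)) ≤ c (σ j) := by
        apply hmono
        have : (σ.symm i : ℕ) ≤ (j : ℕ) := by omega
        exact this
      simpa using this.trans hj3
    cases b
    · -- deviating to a₁
      have hmem : i ∈ (Finset.univ.filter fun p : Fin d => t p = true) := by
        simp [hti]
      have hcard' :
          (Finset.univ.filter fun p : Fin d =>
            Function.update t i false p = true).card = K - 1 := by
        rw [filter_update_false d t i hti, Finset.card_erase_of_mem hmem, hcard]
      have hupd : Function.update t i false i = false := by simp
      rw [payTwo, payTwo, hcard, hcard', if_pos hti, if_neg (by simp [hupd])]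
      have hKpos : (0 : ℝ) < (K : ℝ) := by exact_mod_cast hK1
      have := hcost
      rw [gthr] at this
      rw [Ssum, Rsum] at this
      linarith [this]
    · -- "deviating" to a₂ : same profile
      have : Function.update t i true = t := by
        funext p
        by_cases hp : p = i <;> simp [Function.update, hp, hti]
      rw [this]
  · -- player i plays a₁
    have hti : t i = false := by simp [ht, hi]
    have hKlt : K < d := lt_of_le_of_lt (not_lt.mp hi) (σ.symm i).isLt
    -- his cost exceeds gthr (K+1)
    have hcost : gthr d u (K + 1) < c i := by
      have hnP : ¬ P (K + 1) :=
        Nat.findGreatest_is_greatest (P := P) (n := d) (k := K + 1)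
          (by rw [← hK]; omega) (by omega)
      have hKfin : ((⟨K, hKlt⟩ : Fin d) : ℕ) = (K + 1) - 1 := by simp
      have h1 : ¬ c (σ ⟨K, hKlt⟩) ≤ gthr d u (K + 1) := by
        intro hcon
        exact hnP ⟨⟨K, hKlt⟩, hKfin, by omega, hcon⟩
      have h2 : c (σ ⟨K, hKlt⟩) ≤ c (σ (σ.symm i)) := by
        apply hmono
        have : (K : ℕ) ≤ (σ.symm i : ℕ) := not_lt.mp hi
        exact this
      have := lt_of_not_ge h1
      simpa using this.trans_le h2
    cases b
    · -- "deviating" to a₁ : same profile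
      have : Function.update t i false = t := by
        funext p
        by_cases hp : p = i <;> simp [Function.update, hp, hti]
      rw [this]
    · -- deviating to a₂
      have hnmem : i ∉ (Finset.univ.filter fun p : Fin d => t p = true) := by
        simp [hti]
      have hcard' :
          (Finset.univ.filter fun p : Fin d =>
            Function.update t i true p = true).card = K + 1 := by
        rw [filter_update_true d t i hti, Finset.card_insert_of_notMem hnmem, hcard]
      have hupd : Function.update t i true i = true := by simp
      have hti' : ¬ t i = true := by simp [hti]
      rw [payTwo, payTwo, hcard, hcard', if_pos hupd, if_neg hti']
      have hdK : (0 : ℝ) < (d : ℝ) - (K : ℝ) := by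
        have : (K : ℝ) < (d : ℝ) := by exact_mod_cast hKlt
        linarith
      have := hcost
      rw [gthr, Ssum, Rsum] at this
      simp only [Nat.add_sub_cancel] at this
      push_cast at this ⊢
      linarith [this]
end

section
/- Let G be a score-symmetric competitiveness-based ranking game with d ≥ 2 players, n shared actions, and prizes u_1,…,u_d ∈ [0,1]. Let δ > 0 and let x and x̃ be two mixed profiles such that for every player k and every j ∈ {1,…,n}, |Σ_{l=1}^{j} (x̃^k_l − x^k_l)| < δ. Then for every player i and every action j, |π^i_j(x̃) − π^i_j(x)| < 3^{d−1}·((1+δ)^{d−1} − 1). In particular, if 0 < ε ≤ 1 and δ = ε/(4d²·3^d), then |π^i_j(x̃) − π^i_j(x)| < ε/4 for all i, j. -/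
/-!
Write the share of player `i` deviating to `a_j` as an expectation over the product of the mixed
strategies and exchange the strategies of the players one at a time. Exchanging the strategy of a
player `m ≠ i` changes the expectation by `∑ₗ (x̃ᵐₗ - xᵐₗ) Cₗ`, where `Cₗ ∈ [0,1]` is the expected
share given that `m` plays `a_l`. Since `Cₗ` only depends on whether `σₗ` is below, equal to or above
`σⱼ`, Abel summation bounds this change by two prefix sums, i.e. by `2δ`; the strategy of player `i`
himself is irrelevant. Hence `|π^i_j(x̃) - π^i_j(x)| ≤ 2(d-1)δ`, which is below both stated bounds.
-/

open Finset
open scoped Classical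

/-- Prize share of player `i` in the pure profile `s` of a score-symmetric
competitiveness-based ranking game with shared scores `score` and prizes `u`
(0-indexed: `u ⟨0⟩` is the first prize): if `w` players have strictly higher
score and `t` players (including `i`) are tied with `i`, the tied players
equally share the prizes for positions `w+1, …, w+t`. -/
noncomputable def shareSS (d n : ℕ) (score : Fin n → ℝ) (u : Fin d → ℝ)
    (s : Fin d → Fin n) (i : Fin d) : ℝ :=
  (∑ l : Fin d,
      if (Finset.univ.filter fun k => score (s i) < score (s k)).card ≤ (l : ℕ) ∧
          (l : ℕ) < (Finset.univ.filter fun k => score (s i) < score (s k)).card +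
            (Finset.univ.filter fun k => score (s k) = score (s i)).card
      then u l else 0) /
    (((Finset.univ.filter fun k => score (s k) = score (s i)).card : ℕ) : ℝ)

/-- Expected payoff `π_j^i(x)` of player `i` from playing the pure strategy
`a_j` when every other player `k` plays his mixed strategy `x k`: the
expectation of his prize share minus the cost `c i j`. -/
noncomputable def piSS (d n : ℕ) (score : Fin n → ℝ) (u : Fin d → ℝ)
    (c : Fin d → Fin n → ℝ) (x : Fin d → Fin n → ℝ) (i : Fin d) (j : Fin n) : ℝ :=
  ∑ s : Fin d → Fin n,
    if s i = j then
      (∏ k ∈ Finset.univ.erase i, x k (s k)) * (shareSS d n score u s i - c i j)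
    else 0

open Function

theorem Equiv.funSplitAt_symm_eq_update {ι α : Type*} [DecidableEq ι] (m : ι) (a b : α)
    (t : {k // k ≠ m} → α) :
    (Equiv.funSplitAt m α).symm (a, t) = update ((Equiv.funSplitAt m α).symm (b, t)) m a := by
  ext k
  by_cases hk : k = m
  · subst hk; simp
  · simp [hk]

section ProductExpectation

variable {ι α : Type*} [Fintype ι] [DecidableEq ι] [Fintype α]

noncomputable def expectPi (y : ι → α → ℝ) (f : (ι → α) → ℝ) : ℝ :=
  ∑ s, (∏ k, y k (s k)) * f s

theorem sum_prod_apply_eq_one {y : ι → α → ℝ} (hy : ∀ k, ∑ a, y k a = 1) :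
    ∑ s : ι → α, ∏ k, y k (s k) = 1 := by
  rw [← Fintype.prod_sum, Finset.prod_eq_one fun k _ => hy k]

theorem expectPi_sub_const {y : ι → α → ℝ} (hy : ∀ k, ∑ a, y k a = 1) (f : (ι → α) → ℝ)
    (r : ℝ) : expectPi y (fun s => f s - r) = expectPi y f - r := by
  simp only [expectPi, mul_sub, Finset.sum_sub_distrib, ← Finset.sum_mul,
    sum_prod_apply_eq_one hy, one_mul]

theorem expectPi_mem_Icc {y : ι → α → ℝ} (hy0 : ∀ k a, 0 ≤ y k a)
    (hy1 : ∀ k, ∑ a, y k a = 1) {f : (ι → α) → ℝ} (hf : ∀ s, f s ∈ Set.Icc 0 1) :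
    expectPi y f ∈ Set.Icc 0 1 := by
  have hw : ∀ s : ι → α, 0 ≤ ∏ k, y k (s k) := fun s => Finset.prod_nonneg fun k _ => hy0 k _
  refine ⟨Finset.sum_nonneg fun s _ => mul_nonneg (hw s) (hf s).1, ?_⟩
  calc expectPi y f ≤ ∑ s : ι → α, ∏ k, y k (s k) :=
        Finset.sum_le_sum fun s _ => mul_le_of_le_one_right (hw s) (hf s).2
    _ = 1 := sum_prod_apply_eq_one hy1

noncomputable def condExpectPi (y : ι → α → ℝ) (m : ι) (f : (ι → α) → ℝ) (a : α) : ℝ :=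
  expectPi (fun k : {k // k ≠ m} => y k) fun t => f ((Equiv.funSplitAt m α).symm (a, t))

theorem expectPi_eq_sum_mul_condExpectPi (y : ι → α → ℝ) (m : ι) (f : (ι → α) → ℝ) :
    expectPi y f = ∑ a, y m a * condExpectPi y m f a := by
  rw [expectPi, ← (Equiv.funSplitAt m α).symm.sum_comp, Fintype.sum_prod_type]
  refine Finset.sum_congr rfl fun a _ => ?_
  rw [condExpectPi, expectPi, Finset.mul_sum]
  refine Finset.sum_congr rfl fun t _ => ?_
  have hm : (Equiv.funSplitAt m α).symm (a, t) m = a := by simp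
  have hk : ∀ k : {k // k ≠ m}, (Equiv.funSplitAt m α).symm (a, t) k = t k := fun k => by
    simp [k.2]
  simp only [Fintype.prod_eq_mul_prod_subtype_ne _ m, hm, hk, mul_assoc]

theorem condExpectPi_update (y : ι → α → ℝ) (m : ι) (q : α → ℝ) :
    condExpectPi (update y m q) m = condExpectPi y m := by
  ext f a
  unfold condExpectPi
  congr 1
  funext k
  exact update_of_ne k.2 _ _

theorem expectPi_update (y : ι → α → ℝ) (m : ι) (q : α → ℝ) (f : (ι → α) → ℝ) :
    expectPi (update y m q) f = ∑ a, q a * condExpectPi y m f a := by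
  rw [expectPi_eq_sum_mul_condExpectPi _ m, condExpectPi_update, update_self]

theorem condExpectPi_congr (y : ι → α → ℝ) {m : ι} {f : (ι → α) → ℝ} {a b : α}
    (h : ∀ s, f (update s m a) = f (update s m b)) :
    condExpectPi y m f a = condExpectPi y m f b := by
  unfold condExpectPi
  congr 1
  funext t
  rw [Equiv.funSplitAt_symm_eq_update m a b, h, ← Equiv.funSplitAt_symm_eq_update]

theorem condExpectPi_mem_Icc {y : ι → α → ℝ} (hy0 : ∀ k a, 0 ≤ y k a)
    (hy1 : ∀ k, ∑ a, y k a = 1) (m : ι) {f : (ι → α) → ℝ} (hf : ∀ s, f s ∈ Set.Icc 0 1)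
    (a : α) : condExpectPi y m f a ∈ Set.Icc 0 1 :=
  expectPi_mem_Icc (y := fun k : {k // k ≠ m} => y k) (fun k => hy0 k) (fun k => hy1 k)
    fun _ => hf _

theorem expectPi_update_single [DecidableEq α] (y : ι → α → ℝ) (m : ι) (a : α)
    (f : (ι → α) → ℝ) : expectPi (update y m (Pi.single a 1)) f = condExpectPi y m f a := by
  simp [expectPi_update, Pi.single_apply]

theorem condExpectPi_comp_update (y : ι → α → ℝ) (m : ι) (f : (ι → α) → ℝ) (a b : α) :
    condExpectPi y m (fun s => f (update s m a)) b = condExpectPi y m f a := by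
  unfold condExpectPi
  congr 1
  funext t
  dsimp only
  rw [Equiv.funSplitAt_symm_eq_update m b a, update_idem,
    ← Equiv.funSplitAt_symm_eq_update m a a]

theorem expectPi_comp_update {y : ι → α → ℝ} {m : ι} (hy : ∑ a, y m a = 1) (a : α)
    (f : (ι → α) → ℝ) : expectPi y (fun s => f (update s m a)) = condExpectPi y m f a := by
  simp only [expectPi_eq_sum_mul_condExpectPi _ m, condExpectPi_comp_update, ← Finset.sum_mul,
    hy, one_mul]

end ProductExpectation

theorem abs_sub_le_sum_of_abs_update_sub_le {ι β : Type*} [Fintype ι] [DecidableEq ι]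
    (F : (ι → β) → ℝ) (P : β → Prop) {y y' : ι → β} (hy : ∀ k, P (y k)) (hy' : ∀ k, P (y' k))
    (b : ι → ℝ)
    (hstep : ∀ m (z : ι → β), (∀ k, P (z k)) → |F (update z m (y' m)) - F (update z m (y m))| ≤ b m) :
    |F y' - F y| ≤ ∑ m, b m := by
  let hybrid (s : Finset ι) (k : ι) : β := if k ∈ s then y' k else y k
  have hP : ∀ s k, P (hybrid s k) := fun s k => by
    unfold hybrid; split_ifs
    exacts [hy' k, hy k]
  suffices h : ∀ s, |F (hybrid s) - F y| ≤ ∑ m ∈ s, b m by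
    simpa [hybrid] using h Finset.univ
  intro s
  induction s using Finset.induction_on with
  | empty => simp [hybrid]
  | insert m s hm ih =>
    have hnew : hybrid (insert m s) = update (hybrid s) m (y' m) := by
      ext k; by_cases hk : k = m <;> simp [hybrid, hk]
    have hold : hybrid s = update (hybrid s) m (y m) := by
      ext k; by_cases hk : k = m <;> simp [hybrid, hk, hm]
    calc |F (hybrid (insert m s)) - F y|
        ≤ |F (hybrid (insert m s)) - F (hybrid s)| + |F (hybrid s) - F y| := abs_sub_le _ _ _
      _ ≤ b m + ∑ m ∈ s, b m := by
        rw [hnew]; nth_rw 2 [hold]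
        exact add_le_add (hstep m _ (hP s)) ih
      _ = ∑ m ∈ insert m s, b m := (Finset.sum_insert hm).symm

section Abel

variable {α : Type*} [LinearOrder α] [LocallyFiniteOrderBot α]

theorem sum_mul_eq_of_eq_of_lt_of_gt [Fintype α] {Δ C : α → ℝ} (hΔ : ∑ l, Δ l = 0) {j : α} {a b : ℝ}
    (hlt : ∀ l < j, C l = a) (hgt : ∀ l, j < l → C l = b) :
    ∑ l, Δ l * C l = (a - C j) * ∑ l ∈ Iio j, Δ l - (b - C j) * ∑ l ∈ Iic j, Δ l := by
  have hterm : ∀ l, Δ l * C l = C j * Δ l + (a - C j) * (if l < j then Δ l else 0)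
      + (b - C j) * (Δ l - if l ≤ j then Δ l else 0) := by
    intro l
    rcases lt_trichotomy l j with h | rfl | h
    · simp only [hlt l h, h, h.le, if_true]; ring
    · simp only [lt_irrefl, le_refl, if_true, if_false]; ring
    · simp only [hgt l h, h.not_gt, h.not_ge, if_false]; ring
  simp only [hterm, Finset.sum_add_distrib, ← Finset.mul_sum, Finset.sum_sub_distrib,
    ← Finset.sum_filter, Finset.filter_gt_eq_Iio, Finset.filter_ge_eq_Iic, hΔ]
  ring

theorem abs_sum_Iio_le {Δ : α → ℝ} {δ : ℝ} (hprefix : ∀ l, |∑ k ∈ Iic l, Δ k| ≤ δ) (j : α) :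
    |∑ k ∈ Iio j, Δ k| ≤ δ := by
  rcases (Iio j).eq_empty_or_nonempty with h | h
  · simpa [h] using (abs_nonneg _).trans (hprefix j)
  · have : Iio j = Iic ((Iio j).max' h) := by
      ext k
      simp only [mem_Iio, mem_Iic]
      exact ⟨fun hk => (Iio j).le_max' k (mem_Iio.2 hk),
        fun hk => hk.trans_lt (mem_Iio.1 ((Iio j).max'_mem h))⟩
    rw [this]
    exact hprefix _

theorem abs_sum_mul_le_of_eq_of_lt_of_gt [Fintype α] {Δ C : α → ℝ} (hΔ : ∑ l, Δ l = 0) {δ : ℝ}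
    (hprefix : ∀ l, |∑ k ∈ Iic l, Δ k| ≤ δ) {j : α} {a b : ℝ} (hlt : ∀ l < j, C l = a)
    (hgt : ∀ l, j < l → C l = b) :
    |∑ l, Δ l * C l| ≤ (|a - C j| + |b - C j|) * δ := by
  rw [sum_mul_eq_of_eq_of_lt_of_gt hΔ hlt hgt, add_mul]
  refine (abs_sub _ _).trans (add_le_add ?_ ?_) <;> rw [abs_mul] <;>
    gcongr
  exacts [abs_sum_Iio_le hprefix j, hprefix j]

end Abel

section RankingGame

variable {d n : ℕ} {score : Fin n → ℝ} {u : Fin d → ℝ}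

theorem shareSS_mem_Icc (hu : ∀ l, u l ∈ Set.Icc 0 1) (s : Fin d → Fin n) (i : Fin d) :
    shareSS d n score u s i ∈ Set.Icc 0 1 := by
  set w := #{k | score (s i) < score (s k)}
  set T := #{k | score (s k) = score (s i)}
  have hT : 0 < T := Finset.card_pos.2 ⟨i, by simp⟩
  have hprizes : #{l : Fin d | w ≤ l ∧ l < w + T} ≤ T := by
    simpa using Finset.card_le_card_of_injOn (t := Finset.Ico w (w + T)) Fin.val
      (fun l hl => by simpa using hl) Fin.val_injective.injOn
  unfold shareSS
  refine ⟨div_nonneg (Finset.sum_nonneg fun l _ => ?_) T.cast_nonneg,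
    (div_le_one (by exact_mod_cast hT)).2 ?_⟩
  · split_ifs
    exacts [(hu l).1, le_rfl]
  calc (∑ l : Fin d, if w ≤ l ∧ l < w + T then u l else 0)
      ≤ ∑ l : Fin d, if w ≤ l ∧ l < w + T then (1 : ℝ) else 0 :=
        Finset.sum_le_sum fun l _ => by split_ifs; exacts [(hu l).2, le_rfl]
    _ = #{l : Fin d | w ≤ l ∧ l < w + T} := by rw [Finset.sum_boole]
    _ ≤ T := by exact_mod_cast hprizes

theorem shareSS_update_congr {s : Fin d → Fin n} {i m : Fin d} (hm : m ≠ i) {a b : Fin n}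
    (hlt : score (s i) < score a ↔ score (s i) < score b)
    (heq : score a = score (s i) ↔ score b = score (s i)) :
    shareSS d n score u (update s m a) i = shareSS d n score u (update s m b) i := by
  have hwin : univ.filter (fun k => score (s i) < score (update s m a k))
      = univ.filter fun k => score (s i) < score (update s m b k) := by
    ext k; by_cases hk : k = m <;> simp [hk, hlt]
  have htie : univ.filter (fun k => score (update s m a k) = score (s i))
      = univ.filter fun k => score (update s m b k) = score (s i) := by
    ext k; by_cases hk : k = m <;> simp [hk, heq]
  unfold shareSS
  rw [update_of_ne hm.symm, update_of_ne hm.symm, hwin, htie]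

theorem piSS_eq_expectPi_sub {y : Fin d → Fin n → ℝ} (hy : ∀ k, ∑ l, y k l = 1)
    (c : Fin d → Fin n → ℝ) (i : Fin d) (j : Fin n) :
    piSS d n score u c y i j
      = expectPi y (fun s => shareSS d n score u (update s i j) i) - c i j := by
  have hweight : ∀ s : Fin d → Fin n, ∏ k, update y i (Pi.single j 1) k (s k)
      = if s i = j then ∏ k ∈ univ.erase i, y k (s k) else 0 := fun s => by
    rw [← Finset.mul_prod_erase _ _ (mem_univ i), update_self,
      Finset.prod_congr rfl fun k hk => by rw [update_of_ne (ne_of_mem_erase hk)]]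
    by_cases hs : s i = j <;> simp [hs]
  calc piSS d n score u c y i j
      = expectPi (update y i (Pi.single j 1)) fun s => shareSS d n score u s i - c i j := by
        simp only [piSS, expectPi, hweight, ite_mul, zero_mul]
    _ = expectPi y (fun s => shareSS d n score u (update s i j) i - c i j) := by
        rw [expectPi_update_single, ← expectPi_comp_update (hy i)]
    _ = _ := expectPi_sub_const hy _ _

theorem condExpectPi_shareSS_update_congr (hscore : StrictMono score) (z : Fin d → Fin n → ℝ)
    {i m : Fin d} (hm : m ≠ i) (j : Fin n) {a b : Fin n} (h : compare a j = compare b j) :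
    condExpectPi z m (fun s => shareSS d n score u (update s i j) i) a
      = condExpectPi z m (fun s => shareSS d n score u (update s i j) i) b := by
  refine condExpectPi_congr z fun s => ?_
  rw [update_comm hm, update_comm hm]
  refine shareSS_update_congr hm ?_ ?_ <;>
    simp only [update_self, hscore.lt_iff_lt, hscore.injective.eq_iff]
  · rw [← compare_gt_iff_gt, h, compare_gt_iff_gt]
  · rw [← compare_eq_iff_eq, h, compare_eq_iff_eq]

theorem abs_expectPi_update_sub_le (hscore : StrictMono score) (hu : ∀ l, u l ∈ Set.Icc 0 1)
    {z : Fin d → Fin n → ℝ} (hz0 : ∀ k l, 0 ≤ z k l) (hz1 : ∀ k, ∑ l, z k l = 1)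
    {q q' : Fin n → ℝ} (hq : ∑ l, q l = 1) (hq' : ∑ l, q' l = 1) {δ : ℝ}
    (hclose : ∀ l, |∑ k ∈ Iic l, (q' k - q k)| ≤ δ) (i m : Fin d) (j : Fin n) :
    |expectPi (update z m q') (fun s => shareSS d n score u (update s i j) i)
        - expectPi (update z m q) (fun s => shareSS d n score u (update s i j) i)|
      ≤ if m = i then 0 else 2 * δ := by
  have hΔ : ∑ l, (q' l - q l) = 0 := by rw [Finset.sum_sub_distrib, hq, hq', sub_self]
  rw [expectPi_update, expectPi_update, ← Finset.sum_sub_distrib]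
  simp only [← sub_mul]
  split_ifs with hmi
  · subst hmi
    have hconst := condExpectPi_comp_update z m (fun s => shareSS d n score u s m) j
    simp only [hconst, ← Finset.sum_mul, hΔ, zero_mul, abs_zero, le_refl]
  set C := condExpectPi z m fun s => shareSS d n score u (update s i j) i
  have hC : ∀ l, C l ∈ Set.Icc 0 1 :=
    condExpectPi_mem_Icc hz0 hz1 m fun s => shareSS_mem_Icc hu _ _
  have hdist : ∀ a b, |C a - C b| ≤ 1 := fun a b =>
    abs_sub_le_of_nonneg_of_le (hC a).1 (hC a).2 (hC b).1 (hC b).2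
  let lo : Fin n := ⟨0, j.pos⟩
  let hi : Fin n := ⟨n - 1, Nat.sub_one_lt_of_lt j.isLt⟩
  have hlt : ∀ l < j, C l = C lo := fun l hl =>
    condExpectPi_shareSS_update_congr hscore z hmi j <| by
      rw [compare_lt_iff_lt.2 hl, compare_lt_iff_lt.2 ((show lo ≤ l from Nat.zero_le _).trans_lt hl)]
  have hgt : ∀ l, j < l → C l = C hi := fun l hl =>
    condExpectPi_shareSS_update_congr hscore z hmi j <| by
      rw [compare_gt_iff_gt.2 hl, compare_gt_iff_gt.2
        (hl.trans_le (show l ≤ hi from Nat.le_sub_one_of_lt l.isLt))]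
  have hδ : 0 ≤ δ := (abs_nonneg _).trans (hclose j)
  calc |∑ l, (q' l - q l) * C l| ≤ (|C lo - C j| + |C hi - C j|) * δ :=
        abs_sum_mul_le_of_eq_of_lt_of_gt hΔ hclose hlt hgt
    _ ≤ (1 + 1) * δ := by gcongr <;> apply hdist
    _ = 2 * δ := by ring

theorem abs_piSS_sub_le (hscore : StrictMono score) (hu : ∀ l, u l ∈ Set.Icc 0 1)
    (c : Fin d → Fin n → ℝ) {x xt : Fin d → Fin n → ℝ}
    (hx0 : ∀ k l, 0 ≤ x k l) (hx1 : ∀ k, ∑ l, x k l = 1)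
    (hxt0 : ∀ k l, 0 ≤ xt k l) (hxt1 : ∀ k, ∑ l, xt k l = 1) {δ : ℝ}
    (hclose : ∀ k l, |∑ l' ∈ Iic l, (xt k l' - x k l')| ≤ δ) (i : Fin d) (j : Fin n) :
    |piSS d n score u c xt i j - piSS d n score u c x i j| ≤ 2 * ((d - 1 : ℕ) : ℝ) * δ := by
  rw [piSS_eq_expectPi_sub hxt1, piSS_eq_expectPi_sub hx1, sub_sub_sub_cancel_right]
  calc _ ≤ ∑ m, if m = i then 0 else 2 * δ :=
        abs_sub_le_sum_of_abs_update_sub_le (fun y => expectPi y _)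
          (fun q : Fin n → ℝ => (∀ l, 0 ≤ q l) ∧ ∑ l, q l = 1)
          (fun k => ⟨hx0 k, hx1 k⟩) (fun k => ⟨hxt0 k, hxt1 k⟩) _ fun m z hz =>
          abs_expectPi_update_sub_le hscore hu (fun k => (hz k).1) (fun k => (hz k).2)
            (hx1 m) (hxt1 m) (hclose m) i m j
    _ = 2 * ((d - 1 : ℕ) : ℝ) * δ := by
        rw [Finset.sum_ite, sum_const_zero, zero_add, sum_const, Finset.filter_ne',
          card_erase_of_mem (mem_univ _), card_univ, Fintype.card_fin, nsmul_eq_mul]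
        ring

end RankingGame

theorem two_mul_mul_lt_three_pow_mul {m : ℕ} (hm : 1 ≤ m) {δ : ℝ} (hδ : 0 < δ) :
    2 * (m : ℝ) * δ < 3 ^ m * ((1 + δ) ^ m - 1) := by
  have hbernoulli : 1 + m * δ ≤ (1 + δ) ^ m := one_add_mul_le_pow (by linarith) m
  have hpow : (3 : ℝ) ≤ 3 ^ m := le_self_pow₀ (by norm_num) (by omega)
  have hmδ : 0 < (m : ℝ) * δ := mul_pos (by exact_mod_cast hm) hδ
  calc 2 * (m : ℝ) * δ < 3 * (m * δ) := by linarith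
    _ ≤ 3 ^ m * (m * δ) := by gcongr
    _ ≤ 3 ^ m * ((1 + δ) ^ m - 1) := by gcongr; linarith

/-- if two mixed profiles of a score-symmetric
competitiveness-based ranking game (prizes in [0,1]) have all prefix sums
within `δ` of each other, then all expected payoffs `π_j^i` differ by less than
`3^(d-1)·((1+δ)^(d-1) - 1)`; in particular with `δ = ε/(4d²·3^d)`,
`0 < ε ≤ 1`, they differ by less than `ε/4`. -/
theorem payoff_perturbation_bound (d n : ℕ) (hd : 2 ≤ d)
    (score : Fin n → ℝ) (hscore : StrictMono score)
    (u : Fin d → ℝ) (huI : ∀ l, u l ∈ Set.Icc (0 : ℝ) 1)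
    (c : Fin d → Fin n → ℝ)
    (δ : ℝ)
    (x xt : Fin d → Fin n → ℝ)
    (hx0 : ∀ i j, 0 ≤ x i j) (hx1 : ∀ i, ∑ j, x i j = 1)
    (hxt0 : ∀ i j, 0 ≤ xt i j) (hxt1 : ∀ i, ∑ j, xt i j = 1)
    (hclose : ∀ (k : Fin d) (j : Fin n), |∑ l ∈ Finset.Iic j, (xt k l - x k l)| < δ) :
    (∀ (i : Fin d) (j : Fin n),
        |piSS d n score u c xt i j - piSS d n score u c x i j| <
          3 ^ (d - 1) * ((1 + δ) ^ (d - 1) - 1)) ∧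
    (∀ ε : ℝ, 0 < ε → ε ≤ 1 → δ = ε / (4 * (d : ℝ) ^ 2 * 3 ^ d) →
      ∀ (i : Fin d) (j : Fin n),
        |piSS d n score u c xt i j - piSS d n score u c x i j| < ε / 4) := by
  have hbound := abs_piSS_sub_le hscore huI c hx0 hx1 hxt0 hxt1 fun k l => (hclose k l).le
  refine ⟨fun i j => ?_, fun ε hε _ hδε i j => ?_⟩
  · exact (hbound i j).trans_lt <| two_mul_mul_lt_three_pow_mul (by omega)
      ((abs_nonneg _).trans_lt (hclose i j))
  · have hd' : (2 : ℝ) ≤ d := by exact_mod_cast hd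
    have hcount : 2 * ((d - 1 : ℕ) : ℝ) < (d : ℝ) ^ 2 * 3 ^ d := by
      have h9 : (9 : ℝ) ≤ 3 ^ d := by
        calc (9 : ℝ) = 3 ^ 2 := by norm_num
          _ ≤ 3 ^ d := pow_le_pow_right₀ (by norm_num) hd
      rw [Nat.cast_sub (by omega), Nat.cast_one]
      nlinarith
    refine (hbound i j).trans_lt ?_
    rw [hδε, ← mul_div_assoc, div_lt_div_iff₀ (by positivity) (by norm_num)]
    nlinarith
end

section
/- Let G be a score-symmetric competitiveness-based ranking game with d ≥ 2 players, n shared actions, prizes u_1,…,u_d ∈ [0,1], and costs in [0,1]. Let ε be the inverse of a positive integer and δ = ε/(4d²·3^d). Let x be a Nash equilibrium of G and let x̃ be a mixed profile such that, for every player i, x̃^i is a δ-rounding of x^i: every entry x̃^i_j is a non-negative integer multiple of δ, |Σ_{l=1}^{j} (x̃^i_l − x^i_l)| < δ for every j, and x̃^i_j = x^i_j whenever x^i_j is itself an integer multiple of δ (in particular x̃^i_j = 0 whenever x^i_j = 0). Then x̃ is an ε-approximately well-supported Nash equilibrium of G. -/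
open Finset
open scoped Classical

/-!
Player `i`'s payoff from `a_j` depends on the other players' mixed strategies only through the
mass each of them puts below, on and above `a_j`: it is a sum, over the `3^d` patterns
`t : Fin d → Ordering`, of a product of such masses times a prize share minus a cost, a number in
`[-1, 1]`. Each of these masses is a difference of two partial sums `∑_{l ≤ j}`, which rounding
moves by less than `δ`; so every product moves by at most `2dδ` and the payoff by at most
`3^d · 2dδ = ε / (2d) ≤ ε / 2`. A gap of more than `ε` between two payoffs under `x̃` is therefore
a strict gap under `x`, so the worse action is unused in the equilibrium `x`, and since `0` is a
multiple of `δ` it stays unused in `x̃`.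
-/

theorem abs_prod_sub_prod_le {α : Type*} (s : Finset α) {f g : α → ℝ}
    (hf : ∀ a ∈ s, |f a| ≤ 1) (hg : ∀ a ∈ s, |g a| ≤ 1) :
    |∏ a ∈ s, f a - ∏ a ∈ s, g a| ≤ ∑ a ∈ s, |f a - g a| := by
  induction s using Finset.cons_induction with
  | empty => simp
  | cons a s ha ih =>
    simp only [forall_mem_cons] at hf hg
    have hprod : |∏ b ∈ s, f b| ≤ 1 := by
      rw [abs_prod]
      exact prod_le_one (fun _ _ => abs_nonneg _) hf.2
    rw [prod_cons, prod_cons, sum_cons]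
    calc |f a * ∏ b ∈ s, f b - g a * ∏ b ∈ s, g b|
        = |(f a - g a) * ∏ b ∈ s, f b + g a * (∏ b ∈ s, f b - ∏ b ∈ s, g b)| := by ring_nf
      _ ≤ |f a - g a| * |∏ b ∈ s, f b| + |g a| * |∏ b ∈ s, f b - ∏ b ∈ s, g b| := by
        rw [← abs_mul, ← abs_mul]
        exact abs_add_le _ _
      _ ≤ |f a - g a| * 1 + 1 * ∑ b ∈ s, |f b - g b| := by
        gcongr
        exacts [hg.1, ih hf.2 hg.2]
      _ = |f a - g a| + ∑ b ∈ s, |f b - g b| := by ring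

theorem sum_prod_mul_comp_eq {ι α β R : Type*} [Fintype ι] [DecidableEq ι] [Fintype α]
    [Fintype β] [DecidableEq β] [CommSemiring R] (z : α → β) (f : ι → α → R)
    (G : (ι → β) → R) :
    ∑ s : ι → α, (∏ k, f k (s k)) * G (z ∘ s) =
      ∑ t : ι → β, (∏ k, ∑ l with z l = t k, f k l) * G t := by
  rw [← sum_fiberwise univ (fun s : ι → α => z ∘ s)]
  refine sum_congr rfl fun t _ => ?_
  rw [prod_univ_sum, sum_mul]
  refine sum_congr ?_ fun s hs => ?_
  · ext s
    simp [funext_iff]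
  · congr
    funext k
    exact (mem_filter.1 (Fintype.mem_piFinset.1 hs k)).2

theorem abs_sum_prod_mul_sub_le {ι β : Type*} [Fintype ι] [DecidableEq ι] [Fintype β]
    {p q : ι → β → ℝ} {G : (ι → β) → ℝ} {η : ℝ}
    (hp : ∀ k b, |p k b| ≤ 1) (hq : ∀ k b, |q k b| ≤ 1) (hpq : ∀ k b, |p k b - q k b| ≤ η)
    (hG : ∀ t, |G t| ≤ 1) :
    |∑ t, (∏ k, p k (t k)) * G t - ∑ t, (∏ k, q k (t k)) * G t| ≤
      Fintype.card β ^ Fintype.card ι * (Fintype.card ι * η) := by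
  rw [← sum_sub_distrib]
  refine (abs_sum_le_sum_abs _ _).trans ?_
  calc ∑ t : ι → β, |(∏ k, p k (t k)) * G t - (∏ k, q k (t k)) * G t|
      ≤ ∑ _t : ι → β, ∑ _k : ι, η := by
        refine sum_le_sum fun t _ => ?_
        rw [← sub_mul, abs_mul]
        calc |∏ k, p k (t k) - ∏ k, q k (t k)| * |G t|
            ≤ |∏ k, p k (t k) - ∏ k, q k (t k)| := mul_le_of_le_one_right (abs_nonneg _) (hG t)
          _ ≤ ∑ k, |p k (t k) - q k (t k)| :=
            abs_prod_sub_prod_le _ (fun k _ => hp k _) (fun k _ => hq k _)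
          _ ≤ ∑ _k : ι, η := sum_le_sum fun k _ => hpq k _
    _ = Fintype.card β ^ Fintype.card ι * (Fintype.card ι * η) := by
        simp

theorem abs_sum_filter_compare_le {α : Type*} [Fintype α] [LinearOrder α]
    [LocallyFiniteOrderBot α]
    {a : α → ℝ} {η : ℝ} (hpartial : ∀ j, |∑ l ∈ Iic j, a l| ≤ η) (htotal : ∑ l, a l = 0)
    (j : α) (o : Ordering) :
    |∑ l with compare l j = o, a l| ≤ 2 * η := by
  have hη : 0 ≤ η := (abs_nonneg _).trans (hpartial j)
  have hIio : |∑ l ∈ Iio j, a l| ≤ η := by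
    rcases (Iio j).eq_empty_or_nonempty with h | h
    · simpa [h] using hη
    · have : Iio j = Iic ((Iio j).max' h) := by
        ext l
        simp only [mem_Iio, mem_Iic]
        exact ⟨fun hl => le_max' _ _ (mem_Iio.2 hl),
          fun hl => hl.trans_lt (mem_Iio.1 (max'_mem _ h))⟩
      rw [this]
      exact hpartial _
  cases o
  · have : ({l | compare l j = .lt} : Finset α) = Iio j := by ext; simp [compare_lt_iff_lt]
    rw [this]
    linarith
  · have : ({l | compare l j = .eq} : Finset α) = {j} := by ext; simp
    have hsplit : a j = ∑ l ∈ Iic j, a l - ∑ l ∈ Iio j, a l := by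
      rw [← Iio_insert, sum_insert (by simp)]
      ring
    rw [this, sum_singleton, hsplit, two_mul]
    exact (abs_sub _ _).trans (add_le_add (hpartial j) hIio)
  · have : ({l | compare l j = .gt} : Finset α) = (Iic j)ᶜ := by
      ext; simp [compare_gt_iff_gt]
    have hsplit := sum_compl_add_sum (Iic j) a
    rw [this, eq_neg_of_add_eq_zero_left (hsplit.trans htotal), abs_neg]
    linarith [hpartial j]

section Game

variable {d n : ℕ}

noncomputable def rankShare (u : Fin d → ℝ) (w t : ℕ) : ℝ :=
  (∑ l : Fin d, if w ≤ (l : ℕ) ∧ (l : ℕ) < w + t then u l else 0) / (t : ℝ)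

theorem rankShare_mem_Icc {u : Fin d → ℝ} (hu : ∀ l, u l ∈ Set.Icc (0 : ℝ) 1) (w t : ℕ) :
    rankShare u w t ∈ Set.Icc (0 : ℝ) 1 := by
  have hcard : #{l : Fin d | w ≤ (l : ℕ) ∧ (l : ℕ) < w + t} ≤ t :=
    (card_le_card_of_injOn (t := Ico w (w + t)) Fin.val (fun l hl => by simpa using hl)
      Fin.val_injective.injOn).trans (by simp)
  have hnum : (∑ l : Fin d, if w ≤ (l : ℕ) ∧ (l : ℕ) < w + t then u l else 0) ≤ t :=
    calc (∑ l : Fin d, if w ≤ (l : ℕ) ∧ (l : ℕ) < w + t then u l else 0)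
        ≤ ∑ l : Fin d, if w ≤ (l : ℕ) ∧ (l : ℕ) < w + t then (1 : ℝ) else 0 :=
          sum_le_sum fun l _ => by split_ifs <;> simp [(hu l).2]
      _ ≤ t := by rw [sum_boole]; exact_mod_cast hcard
  refine ⟨div_nonneg (sum_nonneg fun l _ => ?_) t.cast_nonneg, div_le_one_of_le₀ hnum t.cast_nonneg⟩
  split_ifs <;> simp [(hu l).1]

theorem shareSS_eq_rankShare {score : Fin n → ℝ} (hscore : StrictMono score) (u : Fin d → ℝ)
    {s : Fin d → Fin n} {i : Fin d} {j : Fin n} (hsi : s i = j) :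
    shareSS d n score u s i =
      rankShare u #{k | compare (s k) j = .gt} #{k | compare (s k) j = .eq} := by
  subst hsi
  simp only [shareSS, rankShare, compare_gt_iff_gt, compare_eq_iff_eq, hscore.lt_iff_lt,
    hscore.injective.eq_iff]

theorem piSS_eq_sum_compare {score : Fin n → ℝ} (hscore : StrictMono score) (u : Fin d → ℝ)
    (c : Fin d → Fin n → ℝ) (x : Fin d → Fin n → ℝ) (i : Fin d) (j : Fin n) :
    piSS d n score u c x i j =
      ∑ t : Fin d → Ordering,
        (∏ k, ∑ l with compare l j = t k, Function.update x i (Pi.single j 1) k l) *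
          (rankShare u #{k | t k = .gt} #{k | t k = .eq} - c i j) := by
  rw [← sum_prod_mul_comp_eq (fun l => compare l j) _
    (fun t => rankShare u #{k | t k = .gt} #{k | t k = .eq} - c i j)]
  refine sum_congr rfl fun s _ => ?_
  by_cases hsi : s i = j
  · rw [if_pos hsi, shareSS_eq_rankShare hscore u hsi, ← mul_prod_erase univ _ (mem_univ i)]
    simp only [Function.update_self, hsi, Pi.single_eq_same, one_mul, Function.comp_apply]
    congr 1
    exact prod_congr rfl fun k hk => by rw [Function.update_of_ne (ne_of_mem_erase hk)]
  · rw [if_neg hsi, prod_eq_zero (mem_univ i) (by simp [hsi]), zero_mul]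

theorem abs_sum_update_single_le_one {y : Fin d → Fin n → ℝ} (hy0 : ∀ k l, 0 ≤ y k l)
    (hy1 : ∀ k, ∑ l, y k l = 1) (i k : Fin d) (j : Fin n) (s : Finset (Fin n)) :
    |∑ l ∈ s, Function.update y i (Pi.single j 1) k l| ≤ 1 := by
  rcases eq_or_ne k i with rfl | hk
  · rw [Function.update_self, sum_pi_single']
    split_ifs <;> simp
  · rw [Function.update_of_ne hk, abs_of_nonneg (sum_nonneg fun l _ => hy0 k l), ← hy1 k]
    exact sum_le_sum_of_subset_of_nonneg (subset_univ s) fun l _ _ => hy0 k l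

theorem abs_piSS_sub_piSS_le {score : Fin n → ℝ} (hscore : StrictMono score) {u : Fin d → ℝ}
    (hu : ∀ l, u l ∈ Set.Icc (0 : ℝ) 1) {c : Fin d → Fin n → ℝ}
    (hc : ∀ i j, c i j ∈ Set.Icc (0 : ℝ) 1) {x x' : Fin d → Fin n → ℝ}
    (hx0 : ∀ k l, 0 ≤ x k l) (hx1 : ∀ k, ∑ l, x k l = 1)
    (hx'0 : ∀ k l, 0 ≤ x' k l) (hx'1 : ∀ k, ∑ l, x' k l = 1) (i : Fin d) (j : Fin n) {η : ℝ}
    (hzone : ∀ k o, |∑ l with compare l j = o, (x' k l - x k l)| ≤ η) :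
    |piSS d n score u c x' i j - piSS d n score u c x i j| ≤ 3 ^ d * (d * η) := by
  have hη : 0 ≤ η := (abs_nonneg _).trans (hzone i .eq)
  have hmass : ∀ k o,
      |∑ l with compare l j = o, Function.update x' i (Pi.single j 1) k l -
        ∑ l with compare l j = o, Function.update x i (Pi.single j 1) k l| ≤ η := by
    intro k o
    rcases eq_or_ne k i with rfl | hk
    · simpa using hη
    · simpa only [Function.update_of_ne hk, ← sum_sub_distrib] using hzone k o
  have hpayoff : ∀ t : Fin d → Ordering,
      |rankShare u #{k | t k = .gt} #{k | t k = .eq} - c i j| ≤ 1 := fun t => by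
    have := rankShare_mem_Icc hu #{k | t k = .gt} #{k | t k = .eq}
    rw [abs_sub_le_iff]
    constructor <;> linarith [this.1, this.2, (hc i j).1, (hc i j).2]
  rw [piSS_eq_sum_compare hscore, piSS_eq_sum_compare hscore]
  have hcard : Fintype.card Ordering = 3 := rfl
  simpa [hcard] using abs_sum_prod_mul_sub_le
    (fun k _ => abs_sum_update_single_le_one hx'0 hx'1 i k j _)
    (fun k _ => abs_sum_update_single_le_one hx0 hx1 i k j _) hmass hpayoff

end Game

/-- a δ-rounding (δ = ε/(4d²·3^d), ε the inverse of a positive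
integer) of a Nash equilibrium of a score-symmetric competitiveness-based
ranking game with prizes and costs in [0,1] is an ε-approximately
well-supported Nash equilibrium. -/
theorem rounded_NE_is_approx_NE (d n : ℕ)
    (score : Fin n → ℝ) (hscore : StrictMono score)
    (u : Fin d → ℝ) (huI : ∀ l, u l ∈ Set.Icc (0 : ℝ) 1)
    (c : Fin d → Fin n → ℝ)
    (hcI : ∀ i j, c i j ∈ Set.Icc (0 : ℝ) 1)
    (ε : ℝ)
    (δ : ℝ) (hδ : δ = ε / (4 * (d : ℝ) ^ 2 * 3 ^ d))
    (x xt : Fin d → Fin n → ℝ)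
    (hx0 : ∀ i j, 0 ≤ x i j) (hx1 : ∀ i, ∑ j, x i j = 1)
    (hxt0 : ∀ i j, 0 ≤ xt i j) (hxt1 : ∀ i, ∑ j, xt i j = 1)
    (hNE : ∀ (i : Fin d) (j j' : Fin n),
      piSS d n score u c x i j > piSS d n score u c x i j' → x i j' = 0)
    (hclose : ∀ (i : Fin d) (j : Fin n), |∑ l ∈ Finset.Iic j, (xt i l - x i l)| < δ)
    (hpres : ∀ (i : Fin d) (j : Fin n), (∃ a : ℕ, x i j = (a : ℝ) * δ) → xt i j = x i j) :
    ∀ (i : Fin d) (j j' : Fin n),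
      piSS d n score u c xt i j > piSS d n score u c xt i j' + ε → xt i j' = 0 := by
  intro i j j' hgt
  have hd : (1 : ℝ) ≤ d := by exact_mod_cast i.pos
  have hδ0 : 0 ≤ δ := (abs_nonneg _).trans (hclose i j).le
  have hε : 0 ≤ ε := by
    rw [hδ] at hδ0
    exact nonneg_of_mul_nonneg_left (by simpa [div_eq_mul_inv] using hδ0) (by positivity)
  have hbound : (3 : ℝ) ^ d * (d * (2 * δ)) ≤ ε / 2 := by
    rw [hδ, show (3 : ℝ) ^ d * (d * (2 * (ε / (4 * d ^ 2 * 3 ^ d)))) = ε / (2 * d) by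
      field_simp; ring]
    exact div_le_div_of_nonneg_left hε two_pos (by linarith)
  have hpayoff (j₀ : Fin n) :
      |piSS d n score u c xt i j₀ - piSS d n score u c x i j₀| ≤ ε / 2 :=
    (abs_piSS_sub_piSS_le hscore huI hcI hx0 hx1 hxt0 hxt1 i j₀ fun k o =>
      abs_sum_filter_compare_le (fun j => (hclose k j).le)
        (by rw [sum_sub_distrib, hxt1, hx1, sub_self]) j₀ o).trans hbound
  have hx : x i j' = 0 :=
    hNE i j j' (by linarith [abs_le.1 (hpayoff j), abs_le.1 (hpayoff j')])
  rw [hpres i j' ⟨0, by simp [hx]⟩, hx]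
end

section
/- Let d ≥ 4 be an even integer and let 0 < ε′ < 2/(d² + 2d). Consider the d-player game in which each player has two actions a_1 (cost 0) and a_2 (cost c = 2/d − ε′), where in any pure profile a single prize of value 1 is shared equally among the players who play a_2 (or among all d players if all play a_1), and each player's payoff is his prize share minus his action's cost. Then every pure profile in which exactly d/2 players play a_2 (and the remaining d/2 play a_1) is a pure Nash equilibrium. -/
/-!
With `k ≥ 2` players on `a₂`, a player who leaves `a₂` gets nothing, since the other `k - 1`
still share the prize, and a player who joins gets `1/(k+1) - c`. So the profile is an
equilibrium as soon as `1/(k+1) ≤ c ≤ 1/k`, and for `k = d/2` the bound on `ε'` puts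
`c = 2/d - ε'` in this window.
-/

open Finset

/-- Payoff in the symmetric binary single-prize game: `t i = true` means player
`i` plays the strong action `a₂` (cost `c`), `t i = false` means he plays the
weak action `a₁` (cost 0).  The single prize of value 1 is shared equally among
the players playing `a₂`, or among all `d` players if none plays `a₂`. -/
noncomputable def payB (d : ℕ) (c : ℝ) (t : Fin d → Bool) (i : Fin d) : ℝ :=
  if t i then
    1 / (((Finset.univ.filter fun p => t p = true).card : ℕ) : ℝ) - c
  else if (Finset.univ.filter fun p => t p = true).card = 0 then 1 / (d : ℝ)
  else 0

section Profiles

variable {ι : Type*} [Fintype ι] [DecidableEq ι]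

theorem filter_update_true_eq_insert (t : ι → Bool) (i : ι) :
    filter (fun p => Function.update t i true p = true) univ =
      insert i (filter (fun p => t p = true) univ) := by
  ext p
  by_cases hp : p = i <;> simp [hp]

theorem filter_update_false_eq_erase (t : ι → Bool) (i : ι) :
    filter (fun p => Function.update t i false p = true) univ =
      (filter (fun p => t p = true) univ).erase i := by
  ext p
  by_cases hp : p = i <;> simp [hp]

end Profiles

section Payoffs

variable {d : ℕ} {c : ℝ} {t : Fin d → Bool} {i : Fin d}

theorem payB_of_true (hi : t i = true) :
    payB d c t i = 1 / (#{p | t p = true} : ℝ) - c := by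
  simp [payB, hi]

theorem payB_of_false (hi : t i = false) (hk : #{p | t p = true} ≠ 0) :
    payB d c t i = 0 := by
  simp [payB, hi, hk]

theorem payB_update_le_of_card_eq {k : ℕ} (hcard : #{p | t p = true} = k) (hk : 2 ≤ k)
    (hlo : 1 / ((k : ℝ) + 1) ≤ c) (hhi : c ≤ 1 / (k : ℝ)) (b : Bool) :
    payB d c (Function.update t i b) i ≤ payB d c t i := by
  cases hti : t i <;> cases b
  case false.false | true.true =>
    rw [← hti, Function.update_eq_self]
  case true.false =>
    have hcard' : #{p | Function.update t i false p = true} = k - 1 := by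
      rw [filter_update_false_eq_erase, card_erase_of_mem (by simpa using hti), hcard]
    rw [payB_of_false (Function.update_self ..) (by omega), payB_of_true hti, hcard]
    linarith
  case false.true =>
    have hcard' : #{p | Function.update t i true p = true} = k + 1 := by
      rw [filter_update_true_eq_insert, card_insert_of_notMem (by simp [hti]), hcard]
    rw [payB_of_true (Function.update_self ..), payB_of_false hti (by omega), hcard']
    push_cast
    linarith

end Payoffs

theorem two_div_le_one_div_of_two_mul_le {k x : ℝ} (hk : 0 < k) (hx : 2 * k ≤ x) :
    2 / x ≤ 1 / k := by
  rw [div_le_div_iff₀ (by linarith) hk]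
  linarith

theorem one_div_add_one_add_two_div_le {k x : ℝ} (hk : 0 < k) (hx₁ : 2 * k ≤ x)
    (hx₂ : x ≤ 2 * k + 1) :
    1 / (k + 1) + 2 / (x ^ 2 + 2 * x) ≤ 2 / x := by
  have hx : 0 < x := by linarith
  rw [div_add_div _ _ (by positivity) (by positivity), div_le_div_iff₀ (by positivity) hx]
  nlinarith [mul_le_mul_of_nonneg_right hx₂ (by positivity : (0 : ℝ) ≤ x * (x + 2))]

theorem half_profiles_are_pure_NE_general (d : ℕ) (hd : 4 ≤ d)
    (ε' : ℝ) (hε'0 : 0 < ε') (hε'1 : ε' < 2 / ((d : ℝ) ^ 2 + 2 * d))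
    (c : ℝ) (hc : c = 2 / (d : ℝ) - ε')
    (t : Fin d → Bool) (ht : (Finset.univ.filter fun p => t p = true).card = d / 2) :
    ∀ (i : Fin d) (b : Bool), payB d c (Function.update t i b) i ≤ payB d c t i := by
  intro i b
  have hk : 2 ≤ d / 2 := by omega
  have hk₀ : (0 : ℝ) < (d / 2 : ℕ) := by exact_mod_cast (by omega : 0 < d / 2)
  have hkd₁ : 2 * ((d / 2 : ℕ) : ℝ) ≤ d := by exact_mod_cast Nat.mul_div_le d 2
  have hkd₂ : (d : ℝ) ≤ 2 * ((d / 2 : ℕ) : ℝ) + 1 := by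
    exact_mod_cast (by omega : d ≤ 2 * (d / 2) + 1)
  refine payB_update_le_of_card_eq ht hk ?_ ?_ b
  · linarith [one_div_add_one_add_two_div_le hk₀ hkd₁ hkd₂]
  · linarith [two_div_le_one_div_of_two_mul_le hk₀ hkd₁]

/-- for even `d ≥ 4` and cost `c = 2/d - ε'` with
`0 < ε' < 2/(d²+2d)`, every pure profile in which exactly `d/2` players play
the strong action is a pure Nash equilibrium. -/
theorem half_profiles_are_pure_NE (d : ℕ) (hd : 4 ≤ d) (hev : Even d)
    (ε' : ℝ) (hε'0 : 0 < ε') (hε'1 : ε' < 2 / ((d : ℝ) ^ 2 + 2 * d))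
    (c : ℝ) (hc : c = 2 / (d : ℝ) - ε')
    (t : Fin d → Bool) (ht : (Finset.univ.filter fun p => t p = true).card = d / 2) :
    ∀ (i : Fin d) (b : Bool), payB d c (Function.update t i b) i ≤ payB d c t i :=
  half_profiles_are_pure_NE_general d hd ε' hε'0 hε'1 c hc t ht
end
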